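/- arXiv:1811.07736 — 5 statements merged into one kernel-verified Lean document; each statement's English description precedes it below -/
import Mathlib

section
/- The poly-Bernoulli numbers satisfy the duality B_n^{(-k)} = B_k^{(-n)} for all nonnegative integers n and k. -/
/-!
For `k ≥ 0` put `z = 1 - e^{-t}`. Expanding `Li_{-k}(z)/z = ∑_m (m+1)^k z^m` and
`z^m = ∑_n (-1)^(n+m) m! S(n,m) t^n/n!` and exchanging the two sums (legitimate for
`0 < t < log 2`, where `∑_m (m+1)^k (e^t - 1)^m` converges) writes the generating function as a
power series in `t`; comparing coefficients gives the closed form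
`B_n^{(-k)} = ∑_m (-1)^(n+m) m! S(n,m) (m+1)^k`. Inserting the expansion
`(m+1)^k = ∑_j C(m+j,j) (-1)^(k+j) j! S(k,j)` turns it into a double sum which is visibly
symmetric in `n` and `k`.
-/

open Real

/-- The polylogarithm `Li_k(z) = ∑_{m ≥ 1} z^m / m^k` for an integer index `k`
(for `k ≤ 0` this sum is the rational function `Li_{-k}`on `|z| < 1`). -/
noncomputable def Li (k : ℤ) (z : ℝ) : ℝ := ∑' m : ℕ, z ^ (m + 1) / ((m : ℝ) + 1) ^ k

open Finset
open scoped Nat Topology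

theorem sum_range_succ_choose_nsmul {M : Type*} [AddCommMonoid M] (f : ℕ → M) (m : ℕ) :
    ∑ i ∈ range (m + 2), (m + 1).choose i • f i =
      ∑ i ∈ range (m + 1), m.choose i • (f i + f (i + 1)) := by
  have hshift : ∑ i ∈ range (m + 1), m.choose i • f i =
      ∑ i ∈ range (m + 1), m.choose (i + 1) • f (i + 1) + f 0 := by
    rw [sum_range_succ' _ m, sum_range_succ _ m, Nat.choose_succ_self, zero_smul, add_zero,
      Nat.choose_zero_right, one_smul]
  rw [sum_range_succ', Nat.choose_zero_right, one_smul]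
  simp only [Nat.choose_succ_succ', add_smul, sum_add_distrib, smul_add, hshift]
  abel

/-- Inclusion–exclusion count of the surjections from an `n`-set onto an `m`-set. -/
def surjCount (n m : ℕ) : ℤ := ∑ i ∈ range (m + 1), (-1) ^ (m + i) * m.choose i * (i : ℤ) ^ n

theorem sum_choose_mul_succ_pow_eq_surjCount_add (n m : ℕ) :
    ∑ i ∈ range (m + 1), (-1) ^ (m + i) * m.choose i * ((i : ℤ) + 1) ^ n =
      surjCount n m + surjCount n (m + 1) := by
  have h := sum_range_succ_choose_nsmul (fun i => (-1 : ℤ) ^ (m + 1 + i) * (i : ℤ) ^ n) m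
  have hl : surjCount n (m + 1) = ∑ i ∈ range (m + 2),
      (m + 1).choose i • ((-1 : ℤ) ^ (m + 1 + i) * (i : ℤ) ^ n) :=
    sum_congr rfl fun i _ => by rw [nsmul_eq_mul]; ring
  have hr : ∑ i ∈ range (m + 1), m.choose i • ((-1 : ℤ) ^ (m + 1 + i) * (i : ℤ) ^ n +
      (-1 : ℤ) ^ (m + 1 + (i + 1)) * ((i + 1 : ℕ) : ℤ) ^ n) =
      ∑ i ∈ range (m + 1), (-1) ^ (m + i) * m.choose i * ((i : ℤ) + 1) ^ n - surjCount n m := by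
    rw [surjCount, ← sum_sub_distrib]
    exact sum_congr rfl fun i _ => by rw [nsmul_eq_mul]; push_cast; ring
  linear_combination -(hl + h + hr)

theorem surjCount_succ_succ (n m : ℕ) :
    surjCount (n + 1) (m + 1) =
      (m + 1) * ∑ i ∈ range (m + 1), (-1) ^ (m + i) * m.choose i * ((i : ℤ) + 1) ^ n := by
  rw [surjCount, sum_range_succ', mul_sum]
  simp only [CharP.cast_eq_zero, ne_eq, Nat.add_eq_zero_iff, one_ne_zero, and_false,
    not_false_eq_true, zero_pow, mul_zero, add_zero]
  refine sum_congr rfl fun i _ => ?_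
  have h : ((m + 1).choose (i + 1) : ℤ) * (i + 1) = (m + 1) * m.choose i := by
    exact_mod_cast (Nat.add_one_mul_choose_eq m i).symm
  push_cast
  linear_combination (-1) ^ (m + i) * ((i : ℤ) + 1) ^ n * h

theorem surjCount_eq_factorial_mul_stirlingSecond (n m : ℕ) :
    surjCount n m = m ! * Nat.stirlingSecond n m := by
  induction n generalizing m with
  | zero =>
    rcases m with _ | m
    · simp [surjCount]
    · have h := Int.alternating_sum_range_choose (n := m + 1)
      simp only [surjCount, pow_zero, mul_one, pow_add, mul_assoc, ← mul_sum] at h ⊢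
      simp [h]
  | succ n ih =>
    rcases m with _ | m
    · simp [surjCount]
    · rw [surjCount_succ_succ, sum_choose_mul_succ_pow_eq_surjCount_add, ih, ih,
        Nat.stirlingSecond_succ_succ, Nat.factorial_succ]
      push_cast
      ring

/-- The coefficient of `t ^ n / n!` in `(1 - exp (-t)) ^ m`. -/
def expPowCoeff (n m : ℕ) : ℤ := (-1) ^ (n + m) * (m ! * Nat.stirlingSecond n m)

theorem expPowCoeff_succ_succ (n m : ℕ) :
    expPowCoeff (n + 1) (m + 1) = (m + 1) * (expPowCoeff n m - expPowCoeff n (m + 1)) := by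
  simp only [expPowCoeff, Nat.stirlingSecond_succ_succ, Nat.factorial_succ]
  push_cast
  ring

theorem expPowCoeff_eq_zero_of_lt {n m : ℕ} (h : n < m) : expPowCoeff n m = 0 := by
  simp [expPowCoeff, Nat.stirlingSecond_eq_zero_of_lt h]

theorem succ_pow_eq_sum_choose_mul_expPowCoeff (k m : ℕ) :
    ((m : ℤ) + 1) ^ k = ∑ j ∈ range (k + 1), (m + j).choose j * expPowCoeff k j := by
  induction k with
  | zero => simp [expPowCoeff]
  | succ k ih =>
    set T : ℕ → ℤ := fun j => (m + j).choose j * expPowCoeff k j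
    -- the recurrence of `expPowCoeff` makes the sum for `k + 1` telescope against `(m+1) ∑ T`
    have hstep : ∀ i, ((m + (i + 1)).choose (i + 1) : ℤ) * expPowCoeff (k + 1) (i + 1) =
        (m + 1) * T i - ((i + 1 : ℕ) * T (i + 1) - i * T i) := by
      intro i
      have h : ((m + i + 1).choose (i + 1) : ℤ) * (i + 1) = (m + i + 1) * (m + i).choose i := by
        exact_mod_cast (Nat.add_one_mul_choose_eq (m + i) i).symm
      simp only [T, expPowCoeff_succ_succ, ← add_assoc]
      push_cast
      linear_combination expPowCoeff k i * h
    have hT : T (k + 1) = 0 := by simp [T, expPowCoeff_eq_zero_of_lt (Nat.lt_succ_self k)]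
    rw [sum_range_succ', sum_congr rfl fun i _ => hstep i, sum_sub_distrib, ← mul_sum, ← ih,
      sum_range_sub (fun i => (i : ℤ) * T i), hT]
    simp [expPowCoeff, pow_succ, mul_comm]

/-- The closed form of the poly-Bernoulli number `B_n^{(-k)}`. -/
def polyBernoulliNeg (n k : ℕ) : ℤ := ∑ m ∈ range (n + 1), expPowCoeff n m * ((m : ℤ) + 1) ^ k

theorem polyBernoulliNeg_eq_sum_sum (n k : ℕ) :
    polyBernoulliNeg n k = ∑ m ∈ range (n + 1), ∑ j ∈ range (k + 1),
      (m + j).choose j * expPowCoeff n m * expPowCoeff k j := by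
  refine sum_congr rfl fun m _ => ?_
  rw [succ_pow_eq_sum_choose_mul_expPowCoeff, mul_sum]
  exact sum_congr rfl fun j _ => by ring

theorem polyBernoulliNeg_comm (n k : ℕ) : polyBernoulliNeg n k = polyBernoulliNeg k n := by
  rw [polyBernoulliNeg_eq_sum_sum, polyBernoulliNeg_eq_sum_sum, sum_comm]
  refine sum_congr rfl fun j _ => sum_congr rfl fun m _ => ?_
  rw [add_comm j m, ← Nat.choose_symm_add]
  ring

theorem hasSum_pow_div_factorial (x : ℝ) : HasSum (fun n => x ^ n / n !) (exp x) := by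
  rw [exp_eq_exp_ℝ]
  exact NormedSpace.expSeries_div_hasSum_exp x

theorem hasSum_factorial_mul_stirlingSecond (t : ℝ) (m : ℕ) :
    HasSum (fun n => (m ! * Nat.stirlingSecond n m : ℝ) * t ^ n / n !) ((exp t - 1) ^ m) := by
  have h := hasSum_sum fun i (_ : i ∈ range (m + 1)) =>
    (hasSum_pow_div_factorial (i * t)).mul_left ((-1 : ℝ) ^ (m + i) * m.choose i)
  have hexp : (exp t - 1) ^ m =
      ∑ i ∈ range (m + 1), (-1) ^ (m + i) * m.choose i * exp (i * t) := by
    rw [sub_pow]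
    refine sum_congr rfl fun i _ => ?_
    rw [← exp_nat_mul]
    ring
  rw [hexp]
  refine h.congr_fun fun n => ?_
  have hsurj := congrArg (fun z : ℤ => (z : ℝ)) (surjCount_eq_factorial_mul_stirlingSecond n m)
  push_cast [surjCount] at hsurj
  rw [← hsurj, sum_mul, sum_div]
  exact sum_congr rfl fun i _ => by ring

theorem hasSum_expPowCoeff (t : ℝ) (m : ℕ) :
    HasSum (fun n => (expPowCoeff n m : ℝ) * t ^ n / n !) ((1 - exp (-t)) ^ m) := by
  have h := (hasSum_factorial_mul_stirlingSecond (-t) m).mul_left ((-1) ^ m)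
  rw [← mul_pow, neg_one_mul, neg_sub] at h
  refine h.congr_fun fun n => ?_
  simp only [expPowCoeff, neg_pow t, pow_add]
  push_cast
  ring

theorem hasSum_abs_expPowCoeff (t : ℝ) (m : ℕ) :
    HasSum (fun n => |(expPowCoeff n m : ℝ)| * t ^ n / n !) ((exp t - 1) ^ m) := by
  convert hasSum_factorial_mul_stirlingSecond t m using 3 with n
  simp [expPowCoeff, abs_mul]

theorem Li_neg_div_eq_tsum (k : ℕ) {z : ℝ} (hz : z ≠ 0) :
    Li (-k) z / z = ∑' m : ℕ, ((m : ℝ) + 1) ^ k * z ^ m := by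
  rw [div_eq_iff hz, mul_comm, ← tsum_mul_left, Li]
  exact tsum_congr fun m => by rw [zpow_neg, zpow_natCast, pow_succ]; field_simp

theorem hasSum_Li_neg_div (k : ℕ) {z : ℝ} (hz : z ≠ 0) (hz1 : |z| < 1) :
    HasSum (fun m : ℕ => ((m : ℝ) + 1) ^ k * z ^ m) (Li (-k) z / z) := by
  rw [Li_neg_div_eq_tsum k hz]
  refine Summable.hasSum ?_
  have h := (summable_nat_add_iff 1).2 (summable_pow_mul_geometric_of_norm_lt_one (R := ℝ) k
    (by rwa [norm_eq_abs]))
  refine (h.mul_left z⁻¹).congr fun m => ?_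
  push_cast
  field_simp
  ring

theorem one_le_Li_neg_div (k : ℕ) {z : ℝ} (hz : z ∈ Set.Ioo 0 1) : 1 ≤ Li (-k) z / z := by
  simpa using le_hasSum (hasSum_Li_neg_div k hz.1.ne' (abs_lt.2 ⟨by linarith [hz.1], hz.2⟩)) 0
    fun m _ => by positivity [hz.1]

theorem one_sub_exp_neg_mem_Ioo {t : ℝ} (ht : 0 < t) : 1 - exp (-t) ∈ Set.Ioo 0 1 :=
  ⟨by linarith [exp_lt_one_iff.2 (neg_lt_zero.2 ht)], by linarith [exp_pos (-t)]⟩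

theorem summable_succ_pow_mul_expPowCoeff (k : ℕ) {t : ℝ} (ht0 : 0 < t) (ht : t < log 2) :
    Summable fun p : ℕ × ℕ =>
      ((p.1 : ℝ) + 1) ^ k * ((expPowCoeff p.2 p.1 : ℝ) * t ^ p.2 / p.2 !) := by
  have hnorm : ∀ m n : ℕ, ‖((m : ℝ) + 1) ^ k * ((expPowCoeff n m : ℝ) * t ^ n / n !)‖ =
      ((m : ℝ) + 1) ^ k * (|(expPowCoeff n m : ℝ)| * t ^ n / n !) := fun m n => by
    simp [abs_of_pos ht0, abs_of_pos (Nat.cast_add_one_pos (α := ℝ) m)]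
  have hfiber m := (hasSum_abs_expPowCoeff t m).mul_left (((m : ℝ) + 1) ^ k)
  have hexp0 : 0 < exp t - 1 := by linarith [one_lt_exp_iff.2 ht0]
  have hexp1 : |exp t - 1| < 1 := by
    have h2 := exp_lt_exp.2 ht
    rw [exp_log two_pos] at h2
    rw [abs_of_pos hexp0]
    linarith
  refine Summable.of_norm ((summable_prod_of_nonneg fun p => norm_nonneg _).2
    ⟨fun m => ?_, ?_⟩) <;> simp only [hnorm]
  · exact (hfiber m).summable
  · simp only [fun m => (hfiber m).tsum_eq]
    exact (hasSum_Li_neg_div k hexp0.ne' hexp1).summable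

theorem hasSum_polyBernoulliNeg (k : ℕ) {t : ℝ} (ht0 : 0 < t) (ht : t < log 2) :
    HasSum (fun n => (polyBernoulliNeg n k : ℝ) * t ^ n / n !)
      (Li (-k) (1 - exp (-t)) / (1 - exp (-t))) := by
  set F : ℕ × ℕ → ℝ := fun p =>
    ((p.1 : ℝ) + 1) ^ k * ((expPowCoeff p.2 p.1 : ℝ) * t ^ p.2 / p.2 !)
  have hF : Summable F := summable_succ_pow_mul_expPowCoeff k ht0 ht
  have hm := hF.hasSum.prod_fiberwise fun m =>
    (hasSum_expPowCoeff t m).mul_left (((m : ℝ) + 1) ^ k)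
  rw [Li_neg_div_eq_tsum k (one_sub_exp_neg_mem_Ioo ht0).1.ne', hm.tsum_eq]
  refine ((Equiv.prodComm ℕ ℕ).hasSum_iff.2 hF.hasSum).prod_fiberwise fun n => ?_
  have hfin : HasSum (fun m => F (m, n)) (∑ m ∈ range (n + 1), F (m, n)) :=
    hasSum_sum_of_ne_finset_zero fun m hm => by
      have hnm : n < m := by simp only [mem_range, not_lt] at hm; omega
      simp [F, expPowCoeff_eq_zero_of_lt hnm]
  have hval : (polyBernoulliNeg n k : ℝ) * t ^ n / n ! = ∑ m ∈ range (n + 1), F (m, n) := by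
    rw [polyBernoulliNeg]
    push_cast
    rw [sum_mul, sum_div]
    exact sum_congr rfl fun m _ => by ring
  rw [hval]
  exact hfin

theorem eq_zero_of_hasSum_pow_mul_eq_zero {c : ℕ → ℝ} {ε : ℝ} (hε : 0 < ε)
    (h : ∀ x ∈ Set.Ioo 0 ε, HasSum (fun n => c n * x ^ n) 0) : c = 0 := by
  set p := FormalMultilinearSeries.ofScalars ℝ c
  have hr : 0 < p.radius := by
    have hx : ε / 2 ∈ Set.Ioo 0 ε := ⟨half_pos hε, half_lt_self hε⟩
    refine lt_of_lt_of_le ?_ (p.le_radius_of_tendsto (r := (ε / 2).toNNReal) (l := 0) ?_)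
    · simpa using hx.1
    · have := (h _ hx).summable.tendsto_atTop_zero.norm
      simpa [p, FormalMultilinearSeries.ofScalars_norm, norm_mul, abs_of_pos hε,
        Real.coe_toNNReal _ hx.1.le] using this
  have hp := (p.hasFPowerSeriesOnBall hr).hasFPowerSeriesAt
  have hzero : ∀ᶠ x in 𝓝[>] (0 : ℝ), p.sum x = 0 := by
    filter_upwards [Ioo_mem_nhdsGT hε] with x hx
    change FormalMultilinearSeries.ofScalarsSum c x = 0
    simpa [FormalMultilinearSeries.ofScalars_sum_eq, mul_comm] using (h x hx).tsum_eq
  have hfreq : ∃ᶠ x in 𝓝[≠] (0 : ℝ), p.sum x = 0 :=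
    hzero.frequently.filter_mono (nhdsWithin_mono 0 fun x hx => ne_of_gt hx)
  have := hp.eq_zero_of_eventually (hp.analyticAt.frequently_zero_iff_eventually_zero.1 hfreq)
  exact (FormalMultilinearSeries.ofScalars_series_eq_zero ℝ).1 this

theorem eq_of_hasSum_pow_mul {a b : ℕ → ℝ} {f : ℝ → ℝ} {ε : ℝ} (hε : 0 < ε)
    (ha : ∀ x ∈ Set.Ioo 0 ε, HasSum (fun n => a n * x ^ n) (f x))
    (hb : ∀ x ∈ Set.Ioo 0 ε, HasSum (fun n => b n * x ^ n) (f x)) : a = b :=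
  sub_eq_zero.1 <| eq_zero_of_hasSum_pow_mul_eq_zero hε fun x hx => by
    simpa [sub_mul] using (ha x hx).sub (hb x hx)

theorem eq_polyBernoulliNeg_of_Li_neg_div (b : ℕ → ℝ) (k : ℕ) {ε : ℝ} (hε : 0 < ε)
    (hb : ∀ t : ℝ, 0 < t → t < ε →
      Li (-k) (1 - exp (-t)) / (1 - exp (-t)) = ∑' n : ℕ, b n * t ^ n / n !)
    (n : ℕ) : b n = polyBernoulliNeg n k := by
  have hcoeff := eq_of_hasSum_pow_mul (a := fun n => b n / n !)
    (b := fun n => (polyBernoulliNeg n k : ℝ) / n !)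
    (f := fun t => Li (-k) (1 - exp (-t)) / (1 - exp (-t))) (lt_min hε (log_pos one_lt_two))
    (fun x hx => ?_) (fun x hx => ?_)
  · have hn : (n ! : ℝ) ≠ 0 := Nat.cast_ne_zero.2 n.factorial_ne_zero
    simpa [div_left_inj' hn] using congrFun hcoeff n
  · have hsum := hb x hx.1 (hx.2.trans_le (min_le_left _ _))
    -- the left side is at least `1`, so the series cannot have the junk sum `0`
    have hs : Summable fun n => b n * x ^ n / n ! := by
      by_contra hns
      have := one_le_Li_neg_div k (one_sub_exp_neg_mem_Ioo hx.1)
      rw [hsum, tsum_eq_zero_of_not_summable hns] at this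
      norm_num at this
    rw [hsum]
    exact hs.hasSum.congr_fun fun n => by ring
  · exact (hasSum_polyBernoulliNeg k hx.1 (hx.2.trans_le (min_le_right _ _))).congr_fun
      fun n => by ring

/-- Poly-Bernoulli duality `B_n^{(-k)} = B_k^{(-n)}`, stated for any family
`B n k` of numbers satisfying the defining generating-series property
`Li_k(1-e^{-t})/(1-e^{-t}) = ∑_{n ≥ 0} B_n^{(k)} t^n/n!` near `t = 0`. -/
theorem stmt2 (B : ℕ → ℤ → ℝ)
    (hB : ∀ k : ℤ, ∃ ε > (0:ℝ), ∀ t : ℝ, 0 < t → t < ε →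
      Li k (1 - Real.exp (-t)) / (1 - Real.exp (-t)) =
        ∑' n : ℕ, B n k * t ^ n / (n.factorial : ℝ))
    (n k : ℕ) : B n (-(k : ℤ)) = B k (-(n : ℤ)) := by
  have hB' : ∀ n k : ℕ, B n (-(k : ℤ)) = polyBernoulliNeg n k := fun n k => by
    obtain ⟨ε, hε, hk⟩ := hB (-k)
    exact eq_polyBernoulliNeg_of_Li_neg_div (fun n => B n (-k)) k hε hk n
  rw [hB', hB', polyBernoulliNeg_comm]
end

section
/- The numbers C_n^{(k)} satisfy the duality C_n^{(-k-1)} = C_k^{(-n-1)} for all nonnegative integers n and k. -/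
/-!
Write `a(n, j) = Δ^j[x ↦ x^n](1) = j! S(n+1, j+1)`. Expanding `m^(k+1)` in the Newton basis
`binom(m, p)` and summing geometric-type series gives
`Li_{-k-1}(z) = ∑_j (j+1) a(k,j) z^(j+1) / (1-z)^(j+2)`, so at `z = 1 - e^(-t)` the generating
function of `C_n^(-k-1)` is `∑_j (j+1) a(k,j) (e^t-1)^j e^t`. Applying `Δ^j` at `1` to `x ↦ e^(tx)`
shows that `(e^t-1)^j e^t` is the exponential generating function of `n ↦ a(n,j)`. Hence
`C_n^(-k-1) = ∑_j (j+1) a(k,j) a(n,j)`, which is symmetric in `n` and `k`. Agreement of the two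
series on `(0, ε)` identifies their coefficients by the identity theorem for power series.
-/

open Real

open Set Filter Topology Finset fwdDiff

section CommRing

variable {R : Type*} [CommRing R]

theorem fwdDiff_iter_succ_pow_succ_zero (j k : ℕ) :
    Δ_[1] ^[j + 1] (fun x : R ↦ x ^ (k + 1)) 0 = (j + 1) * Δ_[1] ^[j] (fun x : R ↦ x ^ k) 1 := by
  simp only [fwdDiff_iter_eq_sum_shift, zsmul_eq_mul, nsmul_eq_mul, zero_add, mul_one]
  rw [sum_range_succ', mul_sum, Nat.cast_zero, zero_pow k.succ_ne_zero, mul_zero, add_zero]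
  refine sum_congr rfl fun i _ ↦ ?_
  have hchoose : ((j + 1 : ℕ) : R) * j.choose i = (j + 1).choose (i + 1) * (i + 1 : ℕ) := by
    rw [← Nat.cast_mul, ← Nat.cast_mul, Nat.add_one_mul_choose_eq]
  rw [show j + 1 - (i + 1) = j - i by omega]
  push_cast at hchoose ⊢
  linear_combination (-(-1 : R) ^ (j - i) * (1 + i) ^ k) * hchoose

theorem pow_eq_sum_choose_mul_fwdDiff_iter (k m : ℕ) :
    (m : R) ^ k = ∑ p ∈ range (k + 1), (m.choose p : R) * Δ_[1] ^[p] (fun x : R ↦ x ^ k) 0 := by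
  have newton := shift_eq_sum_fwdDiff_iter (1 : R) (fun x ↦ x ^ k) m 0
  simp only [nsmul_eq_mul, mul_one, zero_add] at newton
  rw [newton]
  trans ∑ p ∈ range (m + 1 + (k + 1)), (m.choose p : R) * Δ_[1] ^[p] (fun x : R ↦ x ^ k) 0
  · refine sum_subset (range_subset_range.2 (by omega)) fun p _ hp ↦ ?_
    rw [Nat.choose_eq_zero_of_lt (by simpa using hp), Nat.cast_zero, zero_mul]
  · refine (sum_subset (range_subset_range.2 (by omega)) fun p _ hp ↦ ?_).symm
    rw [fwdDiff_iter_pow_eq_zero_of_lt (by simpa using hp), Pi.zero_apply, mul_zero]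

theorem sum_range_mul_fwdDiff_iter_pow_comm (n k : ℕ) :
    ∑ j ∈ range (k + 1), ((j : R) + 1) * Δ_[1] ^[j] (fun x : R ↦ x ^ k) 1 *
        Δ_[1] ^[j] (fun x : R ↦ x ^ n) 1 =
      ∑ j ∈ range (n + 1), ((j : R) + 1) * Δ_[1] ^[j] (fun x : R ↦ x ^ n) 1 *
        Δ_[1] ^[j] (fun x : R ↦ x ^ k) 1 := by
  have extend : ∀ a b : ℕ,
      ∑ j ∈ range (a + 1), ((j : R) + 1) * Δ_[1] ^[j] (fun x : R ↦ x ^ a) 1 *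
        Δ_[1] ^[j] (fun x : R ↦ x ^ b) 1 =
      ∑ j ∈ range (a + b + 1), ((j : R) + 1) * Δ_[1] ^[j] (fun x : R ↦ x ^ a) 1 *
        Δ_[1] ^[j] (fun x : R ↦ x ^ b) 1 := fun a b ↦
    sum_subset (range_subset_range.2 (by omega)) fun j _ hj ↦ by
      rw [fwdDiff_iter_pow_eq_zero_of_lt (by simpa using hj), Pi.zero_apply, mul_zero, zero_mul]
  rw [extend, extend, add_comm n k]
  exact sum_congr rfl fun j _ ↦ by ring

end CommRing

section NormedField

variable {𝕜 : Type*} [NormedField 𝕜] {z : 𝕜}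

theorem hasSum_choose_mul_geometric (p : ℕ) (hz : ‖z‖ < 1) :
    HasSum (fun m ↦ (m.choose p : 𝕜) * z ^ m) (z ^ p / (1 - z) ^ (p + 1)) := by
  have hvanish : ∀ m ∉ Set.range (· + p), (m.choose p : 𝕜) * z ^ m = 0 := by
    intro m hm
    have : m < p := by
      by_contra h
      exact hm ⟨m - p, Nat.sub_add_cancel (not_lt.1 h)⟩
    simp [Nat.choose_eq_zero_of_lt this]
  refine ((add_left_injective p).hasSum_iff hvanish).1 ?_
  have h := (hasSum_choose_mul_geometric_of_norm_lt_one p hz).mul_left (z ^ p)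
  rw [mul_one_div] at h
  refine h.congr_fun fun m ↦ ?_
  simp only [Function.comp_apply, pow_add]
  ring

theorem hasSum_pow_mul_geometric (k : ℕ) (hz : ‖z‖ < 1) :
    HasSum (fun m : ℕ ↦ (m : 𝕜) ^ k * z ^ m)
      (∑ p ∈ range (k + 1), Δ_[1] ^[p] (fun x : 𝕜 ↦ x ^ k) 0 * (z ^ p / (1 - z) ^ (p + 1))) := by
  refine (hasSum_sum fun p _ ↦ (hasSum_choose_mul_geometric p hz).mul_left _).congr_fun fun m ↦ ?_
  rw [pow_eq_sum_choose_mul_fwdDiff_iter k m, sum_mul]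
  exact sum_congr rfl fun p _ ↦ by ring

end NormedField

theorem HasSum.fwdDiff_iter {ι M G : Type*} [AddCommMonoid M] [AddCommGroup G] [TopologicalSpace G]
    [IsTopologicalAddGroup G] {f : ι → M → G} {g : M → G} (hf : ∀ x, HasSum (fun i ↦ f i x) (g x))
    (h : M) (n : ℕ) (y : M) : HasSum (fun i ↦ Δ_[h] ^[n] (f i) y) (Δ_[h] ^[n] g y) := by
  simp only [fwdDiff_iter_eq_sum_shift]
  exact hasSum_sum fun k _ ↦ (hf _).const_smul _

noncomputable def expMulAddChar (t : ℝ) : AddChar ℝ ℝ where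
  toFun x := exp (t * x)
  map_zero_eq_one' := by simp
  map_add_eq_mul' x y := by rw [mul_add, exp_add]

theorem hasSum_fwdDiff_iter_pow_mul_pow_div_factorial (j : ℕ) (t : ℝ) :
    HasSum (fun n ↦ Δ_[1] ^[j] (fun x : ℝ ↦ x ^ n) 1 * t ^ n / n.factorial)
      ((exp t - 1) ^ j * exp t) := by
  have hexp : ∀ x : ℝ, HasSum (fun n ↦ (t ^ n / n.factorial) • x ^ n) (expMulAddChar t x) := by
    intro x
    have h := NormedSpace.expSeries_div_hasSum_exp (t * x)
    rw [← Real.exp_eq_exp_ℝ] at h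
    refine h.congr_fun fun n ↦ ?_
    rw [smul_eq_mul, mul_pow]
    ring
  have h := HasSum.fwdDiff_iter hexp 1 j 1
  rw [fwdDiff_addChar_eq] at h
  simp only [expMulAddChar, AddChar.coe_mk, mul_one] at h
  refine h.congr_fun fun n ↦ ?_
  rw [← Pi.smul_def, fwdDiff_iter_const_smul, Pi.smul_apply, smul_eq_mul]
  ring

theorem eq_zero_of_forall_hasSum_mul_pow_eq_zero {c : ℕ → ℝ} {ε : ℝ} (hε : 0 < ε)
    (h : ∀ t ∈ Ioo 0 ε, HasSum (fun n ↦ c n * t ^ n) 0) : c = 0 := by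
  set p := FormalMultilinearSeries.ofScalars ℝ c
  have hsummable : Summable fun n ↦ ‖p n‖ * (ε / 2) ^ n := by
    refine (h (ε / 2) ⟨half_pos hε, half_lt_self hε⟩).summable.abs.congr fun n ↦ ?_
    simp [p, abs_mul, abs_of_pos (half_pos hε)]
  have hradius : 0 < p.radius :=
    lt_of_lt_of_le (ENNReal.coe_pos.2 (show (0 : NNReal) < ⟨ε / 2, _⟩ from half_pos hε))
      (p.le_radius_of_summable (r := ⟨ε / 2, (half_pos hε).le⟩) hsummable)
  have hp := p.hasFPowerSeriesOnBall hradius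
  have hsum : ∀ t ∈ Ioo 0 ε, p.sum t = 0 := fun t ht ↦ by
    rw [← FormalMultilinearSeries.ofScalarsSum, FormalMultilinearSeries.ofScalars_sum_eq]
    simpa [smul_eq_mul] using (h t ht).tsum_eq
  have hfreq : ∃ᶠ t in 𝓝[≠] (0 : ℝ), p.sum t = 0 :=
    (eventually_of_mem (Ioo_mem_nhdsGT hε) hsum).frequently.filter_mono (nhdsGT_le_nhdsNE 0)
  have hzero := hp.analyticAt.frequently_zero_iff_eventually_zero.1 hfreq
  exact (FormalMultilinearSeries.ofScalars_series_eq_zero (E := ℝ)).1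
    (hp.hasFPowerSeriesAt.eq_zero_of_eventually hzero)

theorem hasSum_Li_neg_sub_one (k : ℕ) {z : ℝ} (hz : |z| < 1) :
    HasSum (fun m : ℕ ↦ z ^ (m + 1) / ((m : ℝ) + 1) ^ (-(k : ℤ) - 1))
      (∑ j ∈ range (k + 1),
        (j + 1) * Δ_[1] ^[j] (fun x : ℝ ↦ x ^ k) 1 * (z ^ (j + 1) / (1 - z) ^ (j + 2))) := by
  have h := (hasSum_nat_add_iff' 1).2 (hasSum_pow_mul_geometric (k + 1) (z := z) hz)
  simp only [sum_range_succ' _ (k + 1), fwdDiff_iter_succ_pow_succ_zero, sum_range_one,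
    Function.iterate_zero_apply, Nat.cast_zero, zero_pow k.succ_ne_zero, zero_mul, add_zero,
    sub_zero] at h
  have hexp : -(k : ℤ) - 1 = -((k + 1 : ℕ) : ℤ) := by push_cast; ring
  refine h.congr_fun fun m ↦ ?_
  rw [hexp, zpow_neg, zpow_natCast, div_inv_eq_mul]
  push_cast
  ring

theorem Li_neg_sub_one_pos (k : ℕ) {z : ℝ} (hz₀ : 0 < z) (hz₁ : z < 1) :
    0 < Li (-(k : ℤ) - 1) z :=
  (hasSum_Li_neg_sub_one k (abs_lt.2 ⟨by linarith, hz₁⟩)).summable.tsum_pos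
    (fun m ↦ by positivity) 0 (by positivity)

theorem Li_neg_sub_one_one_sub_exp_neg_div (k : ℕ) {t : ℝ} (ht : 0 < t) :
    Li (-(k : ℤ) - 1) (1 - exp (-t)) / (exp t - 1) =
      ∑ j ∈ range (k + 1),
        (j + 1) * Δ_[1] ^[j] (fun x : ℝ ↦ x ^ k) 1 * ((exp t - 1) ^ j * exp t) := by
  have hexp_neg : 0 < exp (-t) ∧ exp (-t) < 1 := ⟨exp_pos _, exp_lt_one_iff.2 (neg_lt_zero.2 ht)⟩
  have hexp : exp t - 1 ≠ 0 := (sub_pos.2 (one_lt_exp_iff.2 ht)).ne'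
  rw [Li, (hasSum_Li_neg_sub_one k (abs_lt.2 ⟨by linarith, by linarith⟩)).tsum_eq, sum_div]
  refine sum_congr rfl fun j _ ↦ ?_
  have hu : exp t ≠ 0 := (exp_pos t).ne'
  have hz : 1 - (exp t)⁻¹ = (exp t - 1) / exp t := by field_simp
  rw [exp_neg, sub_sub_self, hz, div_pow, inv_pow]
  field_simp
  ring

theorem eq_sum_of_Li_neg_sub_one_div_eq_tsum {c : ℕ → ℝ} {k : ℕ} {ε : ℝ} (hε : 0 < ε)
    (hc : ∀ t : ℝ, 0 < t → t < ε →
      Li (-(k : ℤ) - 1) (1 - exp (-t)) / (exp t - 1) = ∑' n : ℕ, c n * t ^ n / n.factorial)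
    (n : ℕ) :
    c n = ∑ j ∈ range (k + 1),
      ((j : ℝ) + 1) * Δ_[1] ^[j] (fun x : ℝ ↦ x ^ k) 1 * Δ_[1] ^[j] (fun x : ℝ ↦ x ^ n) 1 := by
  set F : ℝ → ℝ := fun t ↦
    ∑ j ∈ range (k + 1), (j + 1) * Δ_[1] ^[j] (fun x : ℝ ↦ x ^ k) 1 * ((exp t - 1) ^ j * exp t)
  set d : ℕ → ℝ := fun n ↦ ∑ j ∈ range (k + 1),
      ((j : ℝ) + 1) * Δ_[1] ^[j] (fun x : ℝ ↦ x ^ k) 1 * Δ_[1] ^[j] (fun x : ℝ ↦ x ^ n) 1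
  have hd : ∀ t, HasSum (fun n ↦ d n * t ^ n / n.factorial) (F t) := fun t ↦ by
    refine (hasSum_sum fun j _ ↦
      (hasSum_fwdDiff_iter_pow_mul_pow_div_factorial j t).mul_left _).congr_fun fun n ↦ ?_
    simp only [d, sum_mul, sum_div]
    exact sum_congr rfl fun j _ ↦ by ring
  have hc' : ∀ t ∈ Ioo 0 ε, HasSum (fun n ↦ c n * t ^ n / n.factorial) (F t) := by
    rintro t ⟨ht₀, htε⟩
    have hFt : F t = ∑' n : ℕ, c n * t ^ n / n.factorial :=
      (Li_neg_sub_one_one_sub_exp_neg_div k ht₀).symm.trans (hc t ht₀ htε)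
    -- `hc` does not assert summability, but a divergent series would have sum `0`.
    have hpos : 0 < ∑' n : ℕ, c n * t ^ n / n.factorial := by
      rw [← hc t ht₀ htε]
      exact div_pos (Li_neg_sub_one_pos k (by simp [exp_lt_one_iff, ht₀]) (by simp [exp_pos]))
        (sub_pos.2 (one_lt_exp_iff.2 ht₀))
    have hsummable : Summable fun n ↦ c n * t ^ n / n.factorial := by
      by_contra hns
      exact hpos.ne' (tsum_eq_zero_of_not_summable hns)
    exact hFt ▸ hsummable.hasSum
  have hzero :=
    eq_zero_of_forall_hasSum_mul_pow_eq_zero hε (c := fun n ↦ (c n - d n) / n.factorial)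
      fun t ht ↦ by simpa [sub_div, sub_mul, div_mul_eq_mul_div] using (hc' t ht).sub (hd t)
  simpa [sub_eq_zero, Nat.factorial_ne_zero] using congrFun hzero n

/-- Duality `C_n^{(-k-1)} = C_k^{(-n-1)}`, stated for any family `C n k` of numbers
satisfying the defining generating-series property
`Li_k(1-e^{-t})/(e^t - 1) = ∑_{n ≥ 0} C_n^{(k)} t^n/n!` near `t = 0`. -/
theorem stmt3 (C : ℕ → ℤ → ℝ)
    (hC : ∀ k : ℤ, ∃ ε > (0:ℝ), ∀ t : ℝ, 0 < t → t < ε →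
      Li k (1 - Real.exp (-t)) / (Real.exp t - 1) =
        ∑' n : ℕ, C n k * t ^ n / (n.factorial : ℝ))
    (n k : ℕ) : C n (-(k : ℤ) - 1) = C k (-(n : ℤ) - 1) := by
  obtain ⟨ε, hε, hk⟩ := hC (-(k : ℤ) - 1)
  obtain ⟨δ, hδ, hn⟩ := hC (-(n : ℤ) - 1)
  rw [eq_sum_of_Li_neg_sub_one_div_eq_tsum hε hk, eq_sum_of_Li_neg_sub_one_div_eq_tsum hδ hn,
    sum_range_mul_fwdDiff_iter_pow_comm]
end

section
/- For nonpositive indices, the multiple polylogarithm is a rational function: for all k_1,…,k_r ≥ 0 there exists a polynomial P(x) with integer coefficients such that Li_{-k_1,…,-k_r}(z) = P(z)/(1-z)^{k_1+⋯+k_r+r}, where deg P = r if all k_i = 0 and deg P = k_1+⋯+k_r+r−1 otherwise, and x^r divides P(x); moreover P(x) = x^r when k_1 = ⋯ = k_r = 0. -/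
/-!
Write the last summation variable as `m_r = m_{r-1} + a` with `a ≥ 1` and expand `m_r^{k_r}`
binomially. Summing over `a` first (everything converges absolutely) gives
`Li_{-k_1,…,-k_r}(z) = ∑_{j ≤ k_r} C(k_r, j) Li_{-(k_r - j)}(z) Li_{-k_1,…,-(k_{r-1} + j)}(z)`,
and `Li_{-d}(z) = ∑_{m ≥ 1} m^d z^m = A_d(z) / (1 - z)^{d+1}` with `A_d` monic of degree `max d 1`
(`z` times an Eulerian polynomial). By induction on `r`, `P` is the corresponding combination of
the products `A_{k_r - j} P_j`. All of them have positive leading coefficients, so nothing cancels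
and the degree of `P` is that of the summand `j = k_r`.
-/

open Real Finset

/-- The multiple polylogarithm
`Li_{k_1,…,k_r}(z) = ∑_{1 ≤ m_1 < ⋯ < m_r} z^{m_r}/(m_1^{k_1} ⋯ m_r^{k_r})`
with integer indices, parametrized by the increments `n i`, so that
`m_j = ∑_{i ≤ j} (n_i + 1)`. -/
noncomputable def MLi {r : ℕ} (k : Fin r → ℤ) (z : ℝ) : ℝ :=
  ∑' n : Fin r → ℕ,
    z ^ (∑ i, (n i + 1)) /
      ∏ j, ((∑ i ∈ Finset.Iic j, (n i + 1) : ℕ) : ℝ) ^ (k j)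

open Polynomial

theorem coeff_one_sub_X_pow {R : Type*} [Ring R] (m : ℕ) :
    ((1 - X : R[X]) ^ m).coeff m = (-1) ^ m := by
  have h : (1 - X : R[X]).natDegree ≤ 1 := by compute_degree
  simpa [coeff_one, coeff_X] using coeff_pow_of_natDegree_le (m := m) h

theorem natDegree_sum_eq_and_leadingCoeff_pos {R ι : Type*} [Semiring R] [PartialOrder R]
    [IsOrderedCancelAddMonoid R] {s : Finset ι} {f : ι → R[X]} {n : ℕ}
    (hpos : ∀ i ∈ s, 0 < (f i).leadingCoeff) (hle : ∀ i ∈ s, (f i).natDegree ≤ n)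
    (hex : ∃ i ∈ s, (f i).natDegree = n) :
    (∑ i ∈ s, f i).natDegree = n ∧ 0 < (∑ i ∈ s, f i).leadingCoeff := by
  have hcoeff : 0 < (∑ i ∈ s, f i).coeff n := by
    rw [finsetSum_coeff]
    refine sum_pos' (fun i hi => ?_) ?_
    · rcases (hle i hi).lt_or_eq with h | h
      · rw [coeff_eq_zero_of_natDegree_lt h]
      · exact h ▸ (hpos i hi).le
    · obtain ⟨i, hi, h⟩ := hex
      exact ⟨i, hi, h ▸ hpos i hi⟩
  have hdeg : (∑ i ∈ s, f i).natDegree = n :=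
    le_antisymm (natDegree_sum_le_of_forall_le _ _ hle) (le_natDegree_of_ne_zero hcoeff.ne')
  exact ⟨hdeg, by rwa [leadingCoeff, hdeg]⟩

theorem natDegree_mul_eq_and_leadingCoeff_pos {R : Type*} [Semiring R] [PartialOrder R]
    [IsStrictOrderedRing R] {p q : R[X]} (hp : 0 < p.leadingCoeff) (hq : 0 < q.leadingCoeff) :
    (p * q).natDegree = p.natDegree + q.natDegree ∧ 0 < (p * q).leadingCoeff := by
  have h := mul_pos hp hq
  exact ⟨natDegree_mul' h.ne', leadingCoeff_mul' h.ne' ▸ h⟩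

theorem sum_choose_succ_mul_neg_one_pow (d : ℕ) :
    ∑ j ∈ range (d + 1), ((d + 1).choose j : ℤ) * (-1) ^ (d - j) = 1 := by
  have h := Int.alternating_sum_range_choose_eq_choose (n := d) (m := d)
  rw [Nat.choose_self, Nat.cast_one, mul_one] at h
  have hsign (j : ℕ) (hj : j ≤ d) : ((-1 : ℤ)) ^ (d - j) = (-1) ^ d * (-1) ^ j := by
    obtain ⟨t, rfl⟩ := Nat.exists_eq_add_of_le hj
    rw [Nat.add_sub_cancel_left, pow_add, mul_comm, ← mul_assoc, ← pow_add, ← two_mul, pow_mul]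
    norm_num
  calc ∑ j ∈ range (d + 1), ((d + 1).choose j : ℤ) * (-1) ^ (d - j)
      = (-1) ^ d * ∑ j ∈ range (d + 1), (-1) ^ j * ((d + 1).choose j : ℤ) := by
        rw [mul_sum]
        refine sum_congr rfl fun j hj => ?_
        rw [hsign j (mem_range_succ_iff.mp hj)]
        ring
    _ = 1 := by rw [h, ← pow_add, ← two_mul, pow_mul]; norm_num

theorem sum_add_pi_single {ι M : Type*} [Fintype ι] [DecidableEq ι] [AddCommMonoid M]
    (f : ι → M) (i : ι) (x : M) : ∑ l, (f + Pi.single i x : ι → M) l = ∑ l, f l + x := by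
  simp [sum_add_distrib]

/-- The numerator of `∑ n^d z^n = eulerNumer d (z) / (1 - z)^(d+1)`; the recursion comes from
`(n + 1)^(d+1) - n^(d+1) = ∑_{j ≤ d} C(d+1, j) n^j`. -/
noncomputable def eulerNumer : ℕ → ℤ[X]
  | 0 => 1
  | d + 1 => X * ∑ j : Fin (d + 1), ((d + 1).choose j : ℤ[X]) * eulerNumer j * (1 - X) ^ (d - j)

theorem eulerNumer_monic_and_natDegree (d : ℕ) :
    (eulerNumer d).Monic ∧ (eulerNumer d).natDegree = d := by
  induction d using Nat.strong_induction_on with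
  | _ d ih =>
  cases d with
  | zero => simp [eulerNumer]
  | succ d =>
  set S := ∑ j : Fin (d + 1), ((d + 1).choose j : ℤ[X]) * eulerNumer j * (1 - X) ^ (d - j)
  have hterm (j : Fin (d + 1)) :
      (((d + 1).choose j : ℤ[X]) * eulerNumer j * (1 - X) ^ (d - j)).natDegree ≤ d ∧
      (((d + 1).choose j : ℤ[X]) * eulerNumer j * (1 - X) ^ (d - j)).coeff d =
        ((d + 1).choose j : ℤ) * (-1) ^ (d - j) := by
    obtain ⟨hmonic, hdeg⟩ := ih j (by omega)
    have hj : j + (d - j) = d := by omega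
    have hA : ((d + 1).choose j * eulerNumer j).natDegree ≤ j := by
      simpa [hdeg] using natDegree_mul_le (p := ((d + 1).choose j : ℤ[X])) (q := eulerNumer j)
    have hB : ((1 - X : ℤ[X]) ^ (d - j)).natDegree ≤ d - j := by
      simpa using natDegree_pow_le_of_le (d - j)
        (show (1 - X : ℤ[X]).natDegree ≤ 1 by compute_degree)
    refine ⟨(natDegree_mul_le_of_le hA hB).trans hj.le, ?_⟩
    have hcoeff := coeff_mul_add_eq_of_natDegree_le hA hB
    have hlead : (eulerNumer j).coeff j = 1 := by rw [← hmonic.coeff_natDegree, hdeg]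
    rw [hj, coeff_one_sub_X_pow, coeff_natCast_mul, hlead, mul_one] at hcoeff
    exact hcoeff
  have hle : S.natDegree ≤ d := natDegree_sum_le_of_forall_le _ _ fun j _ => (hterm j).1
  have hcoeff : S.coeff d = 1 := by
    rw [finsetSum_coeff, sum_congr rfl fun j _ => (hterm j).2,
      Fin.sum_univ_eq_sum_range (fun j => ((d + 1).choose j : ℤ) * (-1) ^ (d - j)),
      sum_choose_succ_mul_neg_one_pow]
  have hS : S.Monic := monic_of_natDegree_le_of_coeff_eq_one d hle hcoeff
  have hSdeg : S.natDegree = d := le_antisymm hle (le_natDegree_of_ne_zero (by simp [hcoeff]))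
  rw [eulerNumer]
  exact ⟨monic_X.mul hS, by rw [monic_X.natDegree_mul hS, hSdeg, natDegree_X, add_comm]⟩

theorem hasSum_pow_mul_geometric_of_abs_lt_one {z : ℝ} (hz : |z| < 1) (d : ℕ) :
    HasSum (fun n : ℕ => (n : ℝ) ^ d * z ^ n) (aeval z (eulerNumer d) / (1 - z) ^ (d + 1)) := by
  induction d using Nat.strong_induction_on with
  | _ d ih =>
  cases d with
  | zero => simpa [eulerNumer] using hasSum_geometric_of_abs_lt_one hz
  | succ d =>
  have hz1 : 1 - z ≠ 0 := by linarith [(abs_lt.mp hz).2]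
  set f : ℕ → ℝ := fun n => (n : ℝ) ^ (d + 1) * z ^ n
  obtain ⟨s, hs⟩ : Summable f := summable_pow_mul_geometric_of_norm_lt_one _ (by simpa using hz)
  have hshift : HasSum (fun n => f (n + 1)) s := by
    simpa [f] using (hasSum_nat_add_iff' 1).mpr hs
  have hbinom (n : ℕ) : f (n + 1) - z * f n =
      z * ∑ j : Fin (d + 1), ((d + 1).choose j : ℝ) * ((n : ℝ) ^ (j : ℕ) * z ^ n) := by
    have h := add_pow (n : ℝ) 1 (d + 1)
    rw [sum_range_succ, ← Fin.sum_univ_eq_sum_range] at h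
    simp only [f, Nat.cast_add, Nat.cast_one, h, one_pow, mul_one, Nat.choose_self, Nat.cast_one,
      Nat.sub_self, pow_zero, mul_sum]
    rw [add_mul, sum_mul, add_sub_assoc, pow_succ z n]
    rw [show (n : ℝ) ^ (d + 1) * (z ^ n * z) - z * ((n : ℝ) ^ (d + 1) * z ^ n) = 0 by ring,
      add_zero]
    exact sum_congr rfl fun _ _ => by ring
  have hrec : s - z * s = z * ∑ j : Fin (d + 1),
      ((d + 1).choose j : ℝ) * (aeval z (eulerNumer j) / (1 - z) ^ ((j : ℕ) + 1)) := by
    refine (hshift.sub (hs.mul_left z)).unique ?_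
    simp only [hbinom]
    exact (hasSum_sum fun (j : Fin (d + 1)) _ =>
      (ih j (by have := j.isLt; omega)).mul_left _).mul_left z
  convert hs using 1
  rw [div_eq_iff (pow_ne_zero _ hz1),
    show s * (1 - z) ^ (d + 1 + 1) = (s - z * s) * (1 - z) ^ (d + 1) by ring, hrec, eulerNumer]
  simp only [map_mul, aeval_X, map_sum, map_natCast, map_pow, map_sub, map_one]
  rw [mul_assoc, sum_mul]
  refine congrArg _ (sum_congr rfl fun j _ => ?_)
  rw [show (1 - z) ^ (d + 1) = (1 - z) ^ ((j : ℕ) + 1) * (1 - z) ^ (d - j) by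
    rw [← pow_add]; congr 1; omega]
  field_simp

/-- The numerator of `Li_{-d}(z) = ∑_{m ≥ 1} m^d z^m`. It differs from `eulerNumer d` only at
`d = 0`, where the `n = 0` term `0^0 = 1` of `∑ n^d z^n` is dropped. -/
noncomputable def polylogNumer (d : ℕ) : ℤ[X] := if d = 0 then X else eulerNumer d

theorem polylogNumer_monic (d : ℕ) : (polylogNumer d).Monic := by
  unfold polylogNumer; split_ifs
  · exact monic_X
  · exact (eulerNumer_monic_and_natDegree d).1

theorem natDegree_polylogNumer (d : ℕ) : (polylogNumer d).natDegree = max d 1 := by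
  unfold polylogNumer; split_ifs with hd
  · simp [hd]
  · rw [(eulerNumer_monic_and_natDegree d).2]; omega

theorem X_dvd_polylogNumer (d : ℕ) : (X : ℤ[X]) ∣ polylogNumer d := by
  unfold polylogNumer; split_ifs with hd
  · rfl
  · obtain ⟨d, rfl⟩ := Nat.exists_eq_succ_of_ne_zero hd
    rw [eulerNumer]
    exact dvd_mul_right _ _

theorem hasSum_succ_pow_mul_geometric {z : ℝ} (hz : |z| < 1) (d : ℕ) :
    HasSum (fun n : ℕ => ((n + 1 : ℕ) : ℝ) ^ d * z ^ (n + 1))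
      (aeval z (polylogNumer d) / (1 - z) ^ (d + 1)) := by
  have hval : aeval z (polylogNumer d) / (1 - z) ^ (d + 1) =
      aeval z (eulerNumer d) / (1 - z) ^ (d + 1) - ∑ n ∈ range 1, (n : ℝ) ^ d * z ^ n := by
    rcases eq_or_ne d 0 with rfl | hd
    · have hz1 : 1 - z ≠ 0 := by linarith [(abs_lt.mp hz).2]
      simp only [polylogNumer, ↓reduceIte, eulerNumer, aeval_X, map_one, zero_add, pow_one,
        range_one, sum_singleton, pow_zero, one_mul]
      field_simp
      ring
    · simp [polylogNumer, hd, zero_pow hd]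
  rw [hval]
  exact (hasSum_nat_add_iff' 1).mpr (hasSum_pow_mul_geometric_of_abs_lt_one hz d)

noncomputable def mliNegTerm {r : ℕ} (k : Fin r → ℕ) (z : ℝ) (n : Fin r → ℕ) : ℝ :=
  z ^ (∑ i, (n i + 1)) * ∏ j, ((∑ i ∈ Iic j, (n i + 1) : ℕ) : ℝ) ^ k j

theorem MLi_neg_eq_tsum {r : ℕ} (k : Fin r → ℕ) (z : ℝ) :
    MLi (fun i => -(k i : ℤ)) z = ∑' n, mliNegTerm k z n := by
  simp only [MLi, mliNegTerm, zpow_neg, zpow_natCast, prod_inv_distrib, div_inv_eq_mul]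

theorem abs_mliNegTerm {r : ℕ} (k : Fin r → ℕ) (z : ℝ) (n : Fin r → ℕ) :
    |mliNegTerm k z n| = mliNegTerm k |z| n := by
  rw [mliNegTerm, mliNegTerm, abs_mul, abs_pow, abs_of_nonneg (a := ∏ _, _) (by positivity)]

theorem mliNegTerm_snoc {r : ℕ} (k : Fin r → ℕ) (kl : ℕ) (z : ℝ) (p : Fin r → ℕ) (a : ℕ) :
    mliNegTerm (Fin.snoc k kl) z (Fin.snoc p a) =
      mliNegTerm k z p * (((∑ i, (p i + 1) + (a + 1) : ℕ) : ℝ) ^ kl * z ^ (a + 1)) := by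
  have htotal : ∑ i, ((Fin.snoc p a : Fin (r + 1) → ℕ) i + 1) = ∑ i, (p i + 1) + (a + 1) := by
    simp [Fin.sum_univ_castSucc]
  have hlast : Iic (Fin.last r) = univ := by rw [← Fin.top_eq_last, Iic_top]
  simp only [mliNegTerm, Fin.prod_univ_castSucc, Fin.sum_Iic_castSucc, Fin.snoc_castSucc,
    Fin.snoc_last, hlast, htotal, pow_add]
  ring

theorem mliNegTerm_add_single_last {r : ℕ} (k : Fin (r + 1) → ℕ) (j : ℕ) (z : ℝ)
    (p : Fin (r + 1) → ℕ) :
    mliNegTerm (k + Pi.single (Fin.last r) j) z p =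
      mliNegTerm k z p * ((∑ i, (p i + 1) : ℕ) : ℝ) ^ j := by
  have hlast : Iic (Fin.last r) = univ := by rw [← Fin.top_eq_last, Iic_top]
  simp only [mliNegTerm, Pi.add_apply, pow_add, prod_mul_distrib, Pi.single_apply, pow_ite,
    pow_zero, prod_ite_eq', mem_univ, if_true, hlast, mul_assoc]

theorem hasSum_mliNegTerm_snoc {r : ℕ} (k : Fin (r + 1) → ℕ) (kl : ℕ) {z : ℝ} (hz : |z| < 1)
    {s : ℕ → ℝ} (hs : ∀ j, HasSum (mliNegTerm (k + Pi.single (Fin.last r) j) z) (s j))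
    (habs : ∀ j, Summable (mliNegTerm (k + Pi.single (Fin.last r) j) |z|)) :
    HasSum (mliNegTerm (Fin.snoc k kl) z)
      (∑ j ∈ range (kl + 1), (kl.choose j : ℝ) *
        (aeval z (polylogNumer (kl - j)) / (1 - z) ^ (kl - j + 1) * s j)) := by
  set g : ℕ → ℕ → ℝ := fun d a => ((a + 1 : ℕ) : ℝ) ^ d * z ^ (a + 1)
  have hexpand (a : ℕ) (p : Fin (r + 1) → ℕ) :
      mliNegTerm (Fin.snoc k kl) z (Fin.snoc p a) = ∑ j ∈ range (kl + 1), (kl.choose j : ℝ) *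
        (g (kl - j) a * mliNegTerm (k + Pi.single (Fin.last r) j) z p) := by
    rw [mliNegTerm_snoc, Nat.cast_add, add_pow, sum_mul, mul_sum]
    refine sum_congr rfl fun j _ => ?_
    rw [mliNegTerm_add_single_last]
    ring
  have hprod (j : ℕ) : HasSum (fun q : ℕ × (Fin (r + 1) → ℕ) =>
      g (kl - j) q.1 * mliNegTerm (k + Pi.single (Fin.last r) j) z q.2)
      (aeval z (polylogNumer (kl - j)) / (1 - z) ^ (kl - j + 1) * s j) := by
    have hg : HasSum (g (kl - j)) (aeval z (polylogNumer (kl - j)) / (1 - z) ^ (kl - j + 1)) :=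
      hasSum_succ_pow_mul_geometric hz _
    refine hg.mul (hs j) (summable_mul_of_summable_norm ?_ ?_)
    · have hz' : |(|z|)| < 1 := by rwa [abs_abs]
      simpa only [g, norm_mul, norm_pow, Real.norm_eq_abs, Nat.abs_cast] using
        (hasSum_succ_pow_mul_geometric hz' (kl - j)).summable
    · simpa only [Real.norm_eq_abs, abs_mliNegTerm] using habs j
  have hfun : mliNegTerm (Fin.snoc k kl) z ∘ (Fin.snocEquiv fun _ => ℕ) = fun q =>
      ∑ j ∈ range (kl + 1), (kl.choose j : ℝ) *
        (g (kl - j) q.1 * mliNegTerm (k + Pi.single (Fin.last r) j) z q.2) :=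
    funext fun q => hexpand q.1 q.2
  rw [← (Fin.snocEquiv fun _ => ℕ).hasSum_iff, hfun]
  exact hasSum_sum fun j _ => (hprod j).mul_left _

noncomputable def mliNumer : (r : ℕ) → (Fin (r + 1) → ℕ) → ℤ[X]
  | 0, k => polylogNumer (k 0)
  | r + 1, k => ∑ j ∈ range (k (Fin.last _) + 1),
      ((k (Fin.last _)).choose j : ℤ[X]) * polylogNumer (k (Fin.last _) - j) *
        mliNumer r (Fin.init k + Pi.single (Fin.last r) j)

theorem hasSum_mliNegTerm (r : ℕ) (k : Fin (r + 1) → ℕ) {z : ℝ} (hz : |z| < 1) :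
    HasSum (mliNegTerm k z) (aeval z (mliNumer r k) / (1 - z) ^ (∑ i, k i + (r + 1))) := by
  induction r generalizing z with
  | zero =>
    rw [← (Equiv.funUnique (Fin 1) ℕ).symm.hasSum_iff]
    convert hasSum_succ_pow_mul_geometric hz (k 0) using 1
    · funext a
      simp [mliNegTerm, mul_comm]
    · simp [mliNumer]
  | succ r ih =>
    have hz' : |(|z|)| < 1 := by rwa [abs_abs]
    have h := hasSum_mliNegTerm_snoc (Fin.init k) (k (Fin.last _)) hz (fun j => ih _ hz)
      (fun j => (ih _ hz').summable)
    rw [Fin.snoc_init_self] at h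
    convert h using 1
    have hz1 : 1 - z ≠ 0 := by linarith [(abs_lt.mp hz).2]
    rw [mliNumer, map_sum, sum_div]
    refine sum_congr rfl fun j hj => ?_
    have hj : j ≤ k (Fin.last _) := mem_range_succ_iff.mp hj
    rw [sum_add_pi_single, Fin.sum_univ_castSucc]
    simp only [map_mul, map_natCast]
    rw [show ∑ i : Fin (r + 1), k i.castSucc + k (Fin.last _) + (r + 1 + 1) =
        (k (Fin.last _) - j + 1) + (∑ i, Fin.init k i + j + (r + 1)) by simp only [Fin.init]; omega,
      pow_add]
    field_simp

theorem mliNumer_eq_X_pow (r : ℕ) (k : Fin (r + 1) → ℕ) (hk : ∀ i, k i = 0) :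
    mliNumer r k = X ^ (r + 1) := by
  induction r with
  | zero => simp [mliNumer, polylogNumer, hk]
  | succ r ih =>
    simp [mliNumer, hk, polylogNumer, ih (Fin.init k) fun i => hk _, pow_succ']

theorem X_pow_dvd_mliNumer (r : ℕ) (k : Fin (r + 1) → ℕ) : X ^ (r + 1) ∣ mliNumer r k := by
  induction r with
  | zero => simpa [mliNumer] using X_dvd_polylogNumer (k 0)
  | succ r ih =>
    refine dvd_sum fun j _ => ?_
    rw [mul_assoc, pow_succ']
    exact dvd_mul_of_dvd_right (mul_dvd_mul (X_dvd_polylogNumer _) (ih _)) _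

theorem natDegree_mliNumer_and_leadingCoeff_pos (r : ℕ) (k : Fin (r + 1) → ℕ) :
    (mliNumer r k).natDegree = (if ∑ i, k i = 0 then r + 1 else ∑ i, k i + r) ∧
      0 < (mliNumer r k).leadingCoeff := by
  induction r with
  | zero =>
    simp only [mliNumer, Fin.sum_univ_succ, Fin.sum_univ_zero, natDegree_polylogNumer,
      (polylogNumer_monic _).leadingCoeff]
    exact ⟨by split_ifs <;> omega, one_pos⟩
  | succ r ih =>
    set kl := k (Fin.last (r + 1))
    have hsum : ∑ i, k i = ∑ i, Fin.init k i + kl := Fin.sum_univ_castSucc k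
    have hterm (j : ℕ) (hj : j ≤ kl) :
        ((kl.choose j : ℤ[X]) * polylogNumer (kl - j) *
          mliNumer r (Fin.init k + Pi.single (Fin.last r) j)).natDegree =
          max (kl - j) 1 +
            (if ∑ i, Fin.init k i + j = 0 then r + 1 else ∑ i, Fin.init k i + j + r) ∧
        0 < ((kl.choose j : ℤ[X]) * polylogNumer (kl - j) *
          mliNumer r (Fin.init k + Pi.single (Fin.last r) j)).leadingCoeff := by
      have hchoose : 0 < ((kl.choose j : ℤ[X])).leadingCoeff := by
        rw [← C_eq_natCast, leadingCoeff_C]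
        exact_mod_cast Nat.choose_pos hj
      obtain ⟨hdeg₁, hpos₁⟩ := natDegree_mul_eq_and_leadingCoeff_pos (q := polylogNumer (kl - j))
        hchoose (by rw [(polylogNumer_monic _).leadingCoeff]; exact one_pos)
      obtain ⟨hdeg₂, hpos₂⟩ := ih (Fin.init k + Pi.single (Fin.last r) j)
      obtain ⟨hdeg, hpos⟩ := natDegree_mul_eq_and_leadingCoeff_pos hpos₁ hpos₂
      rw [hdeg, hdeg₁, hdeg₂, natDegree_natCast, natDegree_polylogNumer, sum_add_pi_single,
        zero_add]
      exact ⟨rfl, hpos⟩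
    by_cases hk : ∑ i, k i = 0
    · have hk' : ∀ i, k i = 0 := fun i => (sum_eq_zero_iff.mp hk) i (mem_univ i)
      simp [mliNumer_eq_X_pow _ k hk', hk]
    rw [if_neg hk]
    refine natDegree_sum_eq_and_leadingCoeff_pos
      (fun j hj => (hterm j (mem_range_succ_iff.mp hj)).2) (fun j hj => ?_)
      ⟨kl, self_mem_range_succ kl, ?_⟩
    · rw [(hterm j (mem_range_succ_iff.mp hj)).1]
      have := mem_range_succ_iff.mp hj
      split_ifs <;> omega
    · rw [(hterm kl le_rfl).1]
      split_ifs <;> omega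

theorem stmt5 (r : ℕ) (hr : 0 < r) (k : Fin r → ℕ) :
    ∃ P : Polynomial ℤ,
      (∀ z : ℝ, |z| < 1 →
        MLi (fun i => -(k i : ℤ)) z =
          (Polynomial.aeval z) P / (1 - z) ^ (∑ i, k i + r)) ∧
      P.natDegree = (if ∀ i, k i = 0 then r else ∑ i, k i + r - 1) ∧
      (Polynomial.X ^ r ∣ P) ∧
      ((∀ i, k i = 0) → P = Polynomial.X ^ r) := by
  obtain ⟨r, rfl⟩ := Nat.exists_eq_add_one_of_ne_zero hr.ne'
  have hzero : (∀ i, k i = 0) ↔ ∑ i, k i = 0 := by simp [sum_eq_zero_iff]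
  refine ⟨mliNumer r k, fun z hz => ?_, ?_, X_pow_dvd_mliNumer r k, mliNumer_eq_X_pow r k⟩
  · rw [MLi_neg_eq_tsum, (hasSum_mliNegTerm r k hz).tsum_eq]
  · rw [(natDegree_mliNumer_and_leadingCoeff_pos r k).1]
    simp only [hzero]
    split_ifs <;> omega
end

section
/- Integral representation of multiple zeta-star values: for positive integers k_1,…,k_r with k_r ≥ 2, ζ*(k_1,…,k_r) = (1/∏_{j=1}^r Γ(k_j)) ∫_0^∞⋯∫_0^∞ x_1^{k_1−1}⋯x_r^{k_r−1} · (1/(e^{x_1+⋯+x_r}−1)) · ∏_{j=2}^{r} e^{x_j+⋯+x_r}/(e^{x_j+⋯+x_r}−1) dx_1⋯dx_r. -/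
/-! With `X_j = x_j + ⋯ + x_r`, the integrand is `∏ x_j^{k_j-1}` times `e^{-X_1}` times the
product of the geometric series `∑_{n_j} e^{-n_j X_j}`. Expanding, the term indexed by `n` is
`∏_j x_j^{k_j-1} e^{-m_j x_j}` with `m_j = n_1 + ⋯ + n_j + 1`, whose integral is
`∏_j Γ(k_j) / m_j^{k_j}`; all terms are nonnegative, so the sum and the integral commute. -/

open Real Finset MeasureTheory

/-- The multiple zeta-star value
`ζ*(k_1,…,k_r) = ∑_{1 ≤ m_1 ≤ ⋯ ≤ m_r} 1/(m_1^{k_1} ⋯ m_r^{k_r})`,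
parametrized by increments so that `m_j = (∑_{i ≤ j} n_i) + 1`. -/
noncomputable def MZSV {r : ℕ} (k : Fin r → ℕ) : ℝ :=
  ∑' n : Fin r → ℕ,
    1 / ∏ j, (((∑ i ∈ Finset.Iic j, n i) + 1 : ℕ) : ℝ) ^ (k j)

-- If the integrals are not summable, both sides are junk `0`s.
theorem integral_tsum_of_nonneg {α ι : Type*} [MeasurableSpace α] {μ : Measure α} [Countable ι]
    {f : ι → α → ℝ} (hf_nonneg : ∀ i, 0 ≤ᵐ[μ] f i) (hf_int : ∀ i, Integrable (f i) μ)
    (hf_sum : ∀ᵐ x ∂μ, Summable fun i ↦ f i x) :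
    ∫ x, ∑' i, f i x ∂μ = ∑' i, ∫ x, f i x ∂μ := by
  by_cases hs : Summable fun i ↦ ∫ x, f i x ∂μ
  · refine (integral_tsum_of_summable_integral_norm hf_int (hs.congr fun i ↦ ?_)).symm
    exact integral_congr_ae ((hf_nonneg i).mono fun x hx ↦ (Real.norm_of_nonneg hx).symm)
  · rw [tsum_eq_zero_of_not_summable hs]
    refine integral_undef fun hint ↦ hs (summable_of_sum_le (c := ∫ x, ∑' i, f i x ∂μ)
      (fun i ↦ integral_nonneg_of_ae (hf_nonneg i)) fun s ↦ ?_)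
    rw [← integral_finsetSum s fun i _ ↦ hf_int i]
    refine integral_mono_ae (integrable_finsetSum s fun i _ ↦ hf_int i) hint ?_
    filter_upwards [hf_sum, ae_all_iff.mpr hf_nonneg] with x hx hx0
    exact hx.sum_le_tsum s fun i _ ↦ hx0 i

theorem hasSum_pi_prod_of_nonneg {β : Type*} {r : ℕ} {f : Fin r → β → ℝ} {a : Fin r → ℝ}
    (hf : ∀ i b, 0 ≤ f i b) (ha : ∀ i, HasSum (f i) (a i)) :
    HasSum (fun n : Fin r → β ↦ ∏ i, f i (n i)) (∏ i, a i) := by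
  induction r with
  | zero => simp
  | succ r ih =>
    have ih : HasSum (fun n : Fin r → β ↦ ∏ i : Fin r, f i.succ (n i)) (∏ i : Fin r, a i.succ) :=
      ih (fun i ↦ hf i.succ) fun i ↦ ha i.succ
    have ih_nonneg : 0 ≤ fun n : Fin r → β ↦ ∏ i : Fin r, f i.succ (n i) :=
      fun n ↦ prod_nonneg fun i _ ↦ hf i.succ (n i)
    have hsum := (ha 0).summable.mul_of_nonneg ih.summable (hf 0) ih_nonneg
    have hmul := (ha 0).mul ih hsum
    rw [← (Fin.consEquiv fun _ ↦ β).hasSum_iff, Fin.prod_univ_succ]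
    refine hmul.congr_fun fun p ↦ ?_
    simp only [Function.comp_apply, Fin.consEquiv_apply, Fin.prod_univ_succ, Fin.cons_zero,
      Fin.cons_succ]

theorem hasSum_pi_prod_geometric {r : ℕ} {q : Fin r → ℝ} (h0 : ∀ i, 0 ≤ q i) (h1 : ∀ i, q i < 1) :
    HasSum (fun n : Fin r → ℕ ↦ ∏ i, q i ^ n i) (∏ i, (1 - q i)⁻¹) :=
  hasSum_pi_prod_of_nonneg (fun i n ↦ pow_nonneg (h0 i) n) fun i ↦
    hasSum_geometric_of_lt_one (h0 i) (h1 i)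

theorem sum_sum_Iic_mul_eq_sum_mul_sum_Ici {ι R : Type*} [Fintype ι] [LinearOrder ι]
    [LocallyFiniteOrderBot ι] [LocallyFiniteOrderTop ι] [CommSemiring R] (f g : ι → R) :
    ∑ j, (∑ i ∈ Iic j, f i) * g j = ∑ i, f i * ∑ j ∈ Ici i, g j := by
  simp_rw [sum_mul, mul_sum]
  exact sum_comm' fun j i ↦ by simp

theorem one_sub_exp_neg_inv {x : ℝ} (hx : x ≠ 0) : (1 - exp (-x))⁻¹ = exp x / (exp x - 1) := by
  have : exp x - 1 ≠ 0 := sub_ne_zero.mpr (by rwa [Ne, exp_eq_one_iff])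
  rw [exp_neg]
  field_simp

theorem integrableOn_pow_mul_exp_neg_mul_Ioi (k : ℕ) {m : ℝ} (hm : 0 < m) :
    IntegrableOn (fun t : ℝ ↦ t ^ k * exp (-m * t)) (Set.Ioi 0) := by
  have hk : (-1 : ℝ) < k := by linarith [k.cast_nonneg (α := ℝ)]
  refine (integrableOn_rpow_mul_exp_neg_mul_rpow (p := 1) hk one_pos hm).congr_fun
    (fun t _ ↦ ?_) measurableSet_Ioi
  simp

theorem integral_pow_sub_one_mul_exp_neg_mul_Ioi {k : ℕ} (hk : 1 ≤ k) {m : ℝ} (hm : 0 < m) :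
    ∫ t in Set.Ioi 0, t ^ (k - 1) * exp (-m * t) = Gamma k / m ^ k := by
  have h := integral_rpow_mul_exp_neg_mul_Ioi (a := k) (by positivity) hm
  rw [show (k : ℝ) - 1 = ((k - 1 : ℕ) : ℝ) by push_cast [Nat.cast_sub hk]; ring] at h
  simp_rw [rpow_natCast, ← neg_mul] at h
  rw [h, one_div_pow, one_div_mul_eq_div]

theorem setIntegral_univ_pi_prod {ι E 𝕜 : Type*} [Fintype ι] [RCLike 𝕜] [MeasurableSpace E]
    {μ : ι → Measure E} [∀ i, SigmaFinite (μ i)] (s : ι → Set E) (f : ι → E → 𝕜) :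
    ∫ x in Set.univ.pi s, ∏ i, f i (x i) ∂Measure.pi μ = ∏ i, ∫ t in s i, f i t ∂μ i := by
  rw [Measure.restrict_pi_pi, integral_fintype_prod_eq_prod]

theorem IntegrableOn.univ_pi_prod {ι E 𝕜 : Type*} [Fintype ι] [RCLike 𝕜] [MeasurableSpace E]
    {μ : ι → Measure E} [∀ i, SigmaFinite (μ i)] {s : ι → Set E} {f : ι → E → 𝕜}
    (hf : ∀ i, IntegrableOn (f i) (s i) (μ i)) :
    IntegrableOn (fun x ↦ ∏ i, f i (x i)) (Set.univ.pi s) (Measure.pi μ) := by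
  rw [IntegrableOn, Measure.restrict_pi_pi]
  exact Integrable.fintype_prod hf

theorem hasSum_exp_neg_sum_mul_partialSum {r : ℕ} {x : Fin (r + 1) → ℝ} (hx : ∀ j, 0 < x j) :
    HasSum (fun n : Fin (r + 1) → ℕ ↦ exp (-∑ j, (((∑ i ∈ Iic j, n i) + 1 : ℕ) : ℝ) * x j))
      (1 / (exp (∑ i, x i) - 1) *
        ∏ j ∈ univ.erase 0, exp (∑ i ∈ Ici j, x i) / (exp (∑ i ∈ Ici j, x i) - 1)) := by
  set X : Fin (r + 1) → ℝ := fun j ↦ ∑ i ∈ Ici j, x i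
  have hX : ∀ j, 0 < X j := fun j ↦ sum_pos (fun i _ ↦ hx i) ⟨j, mem_Ici.mpr le_rfl⟩
  have hX0 : X 0 = ∑ i, x i := by simp [X]
  have hterm : ∀ n : Fin (r + 1) → ℕ, exp (-∑ j, (((∑ i ∈ Iic j, n i) + 1 : ℕ) : ℝ) * x j) =
      exp (-X 0) * ∏ i, exp (-X i) ^ n i := by
    intro n
    have hexponent :
        ∑ j, (((∑ i ∈ Iic j, n i) + 1 : ℕ) : ℝ) * x j = X 0 + ∑ i, (n i : ℝ) * X i := by
      push_cast
      simp_rw [add_mul, one_mul, sum_add_distrib, sum_sum_Iic_mul_eq_sum_mul_sum_Ici, hX0, add_comm]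
      rfl
    rw [hexponent, neg_add, exp_add]
    congr 1
    rw [← sum_neg_distrib, exp_sum]
    refine prod_congr rfl fun i _ ↦ ?_
    rw [← exp_nat_mul, mul_neg]
  have hvalue : 1 / (exp (X 0) - 1) * ∏ j ∈ univ.erase 0, exp (X j) / (exp (X j) - 1) =
      exp (-X 0) * ∏ i, (1 - exp (-X i))⁻¹ := by
    rw [← mul_prod_erase univ (fun i : Fin (r + 1) ↦ (1 - exp (-X i))⁻¹) (mem_univ 0),
      ← mul_assoc]
    simp_rw [one_sub_exp_neg_inv (hX _).ne']
    congr 1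
    rw [exp_neg]
    field_simp
  rw [← hX0, hvalue]
  refine ((hasSum_pi_prod_geometric (fun i ↦ (exp_pos _).le)
    fun i ↦ exp_lt_one_iff.mpr (neg_lt_zero.mpr (hX i))).mul_left (exp (-X 0))).congr_fun hterm

theorem hasSum_zetaStar_integrand {r : ℕ} (k : Fin (r + 1) → ℕ) {x : Fin (r + 1) → ℝ}
    (hx : ∀ j, 0 < x j) :
    HasSum (fun n : Fin (r + 1) → ℕ ↦
        ∏ j, x j ^ (k j - 1) * exp (-(((∑ i ∈ Iic j, n i) + 1 : ℕ) : ℝ) * x j))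
      ((∏ j, x j ^ (k j - 1)) * (1 / (exp (∑ i, x i) - 1)) *
        ∏ j ∈ univ.erase 0, exp (∑ i ∈ Ici j, x i) / (exp (∑ i ∈ Ici j, x i) - 1)) := by
  rw [mul_assoc]
  refine ((hasSum_exp_neg_sum_mul_partialSum hx).mul_left _).congr_fun fun n ↦ ?_
  rw [prod_mul_distrib, ← exp_sum, ← sum_neg_distrib]
  simp_rw [neg_mul]

/-- Integral representation of multiple zeta-star values. -/
theorem stmt12 (r : ℕ) (hr : 0 < r) (k : Fin r → ℕ) (hk : ∀ j, 1 ≤ k j) :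
    MZSV k =
      (1 / ∏ j, Real.Gamma (k j)) *
        ∫ x in Set.univ.pi (fun _ : Fin r => Set.Ioi (0 : ℝ)),
          (∏ j, x j ^ (k j - 1)) * (1 / (Real.exp (∑ i, x i) - 1)) *
            ∏ j ∈ Finset.univ.erase (⟨0, hr⟩ : Fin r),
              Real.exp (∑ i ∈ Finset.Ici j, x i) /
                (Real.exp (∑ i ∈ Finset.Ici j, x i) - 1) := by
  obtain ⟨r, rfl⟩ : ∃ r', r = r' + 1 := ⟨r - 1, by omega⟩
  change MZSV k = _ * ∫ x in _, _ * ∏ j ∈ univ.erase 0, _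
  set S : Set (Fin (r + 1) → ℝ) := Set.univ.pi fun _ ↦ Set.Ioi 0
  have hS : MeasurableSet S := MeasurableSet.univ_pi fun _ ↦ measurableSet_Ioi
  set m : (Fin (r + 1) → ℕ) → Fin (r + 1) → ℝ := fun n j ↦ (((∑ i ∈ Iic j, n i) + 1 : ℕ) : ℝ)
  have hm : ∀ n j, 0 < m n j := fun n j ↦ by positivity
  set g : (Fin (r + 1) → ℕ) → (Fin (r + 1) → ℝ) → ℝ :=
    fun n x ↦ ∏ j, x j ^ (k j - 1) * exp (-m n j * x j)
  have hg_int : ∀ n, IntegrableOn (g n) S := fun n ↦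
    IntegrableOn.univ_pi_prod fun j ↦ integrableOn_pow_mul_exp_neg_mul_Ioi _ (hm n j)
  have hg_integral : ∀ n, ∫ x in S, g n x = (∏ j, Gamma (k j)) * (1 / ∏ j, m n j ^ k j) := by
    intro n
    rw [← div_eq_mul_one_div, ← prod_div_distrib]
    refine (setIntegral_univ_pi_prod (μ := fun _ ↦ volume) (fun _ ↦ Set.Ioi 0)
      fun j t ↦ t ^ (k j - 1) * exp (-m n j * t)).trans ?_
    exact prod_congr rfl fun j _ ↦ integral_pow_sub_one_mul_exp_neg_mul_Ioi (hk j) (hm n j)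
  have hg_hasSum := fun x (hx : x ∈ S) ↦ hasSum_zetaStar_integrand k fun j ↦ hx j trivial
  have hg_nonneg : ∀ n, ∀ x ∈ S, 0 ≤ g n x := fun n x hx ↦
    prod_nonneg fun j _ ↦ mul_nonneg (pow_nonneg (hx j trivial).le _) (exp_pos _).le
  have hΓ : ∏ j, Gamma (k j) ≠ 0 :=
    prod_ne_zero_iff.mpr fun j _ ↦ (Gamma_pos_of_pos (by exact_mod_cast hk j)).ne'
  rw [setIntegral_congr_fun hS fun x hx ↦ (hg_hasSum x hx).tsum_eq.symm,
    integral_tsum_of_nonneg (fun n ↦ ae_restrict_of_forall_mem hS (hg_nonneg n)) hg_int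
      (ae_restrict_of_forall_mem hS fun x hx ↦ (hg_hasSum x hx).summable),
    tsum_congr hg_integral, tsum_mul_left, ← mul_assoc, one_div_mul_cancel hΓ, one_mul]
  rfl
end

section
/- The function ξ(2,1;s) := (1/Γ(s)) ∫_0^∞ t^{s−1} Li_{2,1}(1−e^{−t})/(e^t−1) dt satisfies, for Re s > 1, ξ(2,1;s) = 2ζ(3;s) + s·ζ(2;s+1) + ζ(2)·s·ζ(s+1) − 2ζ(3)ζ(s), where ζ(k;s) = ∑_{0<m<n} 1/(m^k n^s). -/
/-!
On `(0, 1)` the double polylogarithm satisfies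
`Li_{2,1}(1 - x) = 2 Li_3(x) - 2 ζ(3) - log x (Li_2(x) + ζ(2))`: both sides tend to `0` as
`x → 1⁻`, and the derivative of their difference is
`(ζ(2) - Li_2(x) - Li_2(1 - x) - log x log (1 - x)) / x`, which vanishes by Euler's reflection
formula (itself proved the same way).

Putting `x = e^{-t}` splits the integrand of `ξ(2,1;s)` into `2 Li_3(e^{-t}) / (e^t - 1)`,
`-2 ζ(3) / (e^t - 1)` and `t (ζ(2) + Li_2(e^{-t})) / (e^t - 1)`. Each quotient is a series of
exponentials `e^{-nt}`, so its Mellin transform is `Γ(s) ζ(s)` or `Γ(s) ζ(k;s)`; the factor `t`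
shifts `s` to `s + 1`, and `Γ(s + 1) = s Γ(s)`.
-/

open Real MeasureTheory

/-- The double polylogarithm `Li_{2,1}(z) = ∑_{1 ≤ m < n} z^n/(m² n)`. -/
noncomputable def Li21 (z : ℝ) : ℝ :=
  ∑' p : ℕ × ℕ,
    z ^ (p.1 + p.2 + 2) / (((p.1 : ℝ) + 1) ^ 2 * ((p.1 : ℝ) + (p.2 : ℝ) + 2))

/-- The double zeta function `ζ(k;s) = ∑_{0 < m < n} 1/(m^k n^s)`. -/
noncomputable def doubleZeta (k : ℕ) (s : ℂ) : ℂ :=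
  ∑' p : ℕ × ℕ,
    1 / (((p.1 : ℂ) + 1) ^ k * ((p.1 : ℂ) + (p.2 : ℂ) + 2) ^ s)

/-- `ξ(2,1;s) = (1/Γ(s)) ∫_0^∞ t^{s-1} Li_{2,1}(1-e^{-t})/(e^t-1) dt`. -/
noncomputable def xi21 (s : ℂ) : ℂ :=
  (1 / Complex.Gamma s) *
    ∫ t in Set.Ioi (0 : ℝ),
      (t : ℂ) ^ (s - 1) *
        ((Li21 (1 - Real.exp (-t)) / (Real.exp t - 1) : ℝ) : ℂ)

open Filter Topology Set

theorem hasDerivAt_tsum_pow_succ_div {ι : Type*} {e : ι → ℕ} {c : ι → ℝ}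
    (hc : ∀ i, (e i : ℝ) + 1 ≤ c i)
    (he : ∀ r : ℝ, 0 ≤ r → r < 1 → Summable fun i => r ^ e i) {x : ℝ} (hx : |x| < 1) :
    HasDerivAt (fun y => ∑' i, y ^ (e i + 1) / c i)
      (∑' i, ((e i : ℝ) + 1) * x ^ e i / c i) x := by
  obtain ⟨r, hxr, hr1⟩ := exists_between hx
  have hr0 : 0 < r := (abs_nonneg x).trans_lt hxr
  have hc0 (i : ι) : 0 < c i := by linarith [hc i, (e i).cast_nonneg (α := ℝ)]
  refine hasDerivAt_tsum_of_isPreconnected (g := fun i y => y ^ (e i + 1) / c i)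
    (g' := fun i y => ((e i : ℝ) + 1) * y ^ e i / c i) (he r hr0.le hr1) Metric.isOpen_ball
    (convex_ball (0 : ℝ) r).isPreconnected (fun i y _ => ?_) (fun i y hy => ?_)
    (Metric.mem_ball_self hr0) ?_ (by simpa [Real.dist_eq] using hxr)
  · simpa [mul_div_assoc] using (hasDerivAt_pow (e i + 1) y).div_const (c i)
  · have hy : |y| < r := by simpa [Real.dist_eq] using hy
    rw [norm_div, norm_mul, Real.norm_of_nonneg (hc0 i).le, norm_pow, Real.norm_eq_abs,
      abs_of_nonneg (by positivity : (0 : ℝ) ≤ (e i : ℝ) + 1), div_le_iff₀' (hc0 i)]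
    exact mul_le_mul (hc i) (pow_le_pow_left₀ (abs_nonneg y) hy.le _) (by positivity) (hc0 i).le
  · simp

theorem summable_pow_fst_add_snd {r : ℝ} (hr0 : 0 ≤ r) (hr1 : r < 1) :
    Summable fun p : ℕ × ℕ => r ^ (p.1 + p.2) := by
  have hg := summable_geometric_of_lt_one hr0 hr1
  simpa only [pow_add] using
    hg.mul_of_nonneg hg (fun n => pow_nonneg hr0 n) (fun n => pow_nonneg hr0 n)

noncomputable def polylog (k : ℕ) (x : ℝ) : ℝ :=
  ∑' n : ℕ, x ^ (n + 1) / ((n : ℝ) + 1) ^ k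

theorem summable_one_div_nat_add_one_pow {k : ℕ} (hk : 2 ≤ k) :
    Summable fun n : ℕ => 1 / ((n : ℝ) + 1) ^ k := by
  simpa using (summable_nat_add_iff 1).2 (Real.summable_one_div_nat_pow.2 hk)

theorem summable_one_div_nat_add_one_rpow {σ : ℝ} (hσ : 1 < σ) :
    Summable fun n : ℕ => 1 / ((n : ℝ) + 1) ^ σ :=
  ((Real.summable_one_div_nat_add_rpow 1 σ).2 hσ).congr fun n => by
    rw [abs_of_pos (by positivity)]

theorem norm_pow_succ_div_le (k : ℕ) {x : ℝ} (hx : |x| ≤ 1) (n : ℕ) :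
    ‖x ^ (n + 1) / ((n : ℝ) + 1) ^ k‖ ≤ 1 / ((n : ℝ) + 1) ^ k := by
  rw [norm_div, norm_pow, Real.norm_eq_abs, norm_pow, Real.norm_of_nonneg (by positivity)]
  gcongr
  exact pow_le_one₀ (abs_nonneg x) hx

theorem summable_norm_pow_succ_div {k : ℕ} (hk : 2 ≤ k) {x : ℝ} (hx : |x| ≤ 1) :
    Summable fun n : ℕ => ‖x ^ (n + 1) / ((n : ℝ) + 1) ^ k‖ :=
  (summable_one_div_nat_add_one_pow hk).of_nonneg_of_le (fun _ => norm_nonneg _)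
    (norm_pow_succ_div_le k hx)

theorem continuousOn_polylog {k : ℕ} (hk : 2 ≤ k) : ContinuousOn (polylog k) (Icc (-1) 1) := by
  rw [continuousOn_iff_continuous_domRestrict]
  exact continuous_tsum (fun n => (continuous_subtype_val.pow _).div_const _)
    (summable_one_div_nat_add_one_pow hk) fun n x => norm_pow_succ_div_le k (abs_le.2 x.2) n

theorem abs_polylog_le {k : ℕ} (hk : 2 ≤ k) {x : ℝ} (hx : |x| ≤ 1) :
    |polylog k x| ≤ polylog k 1 := by
  simp only [polylog, one_pow]
  exact (norm_tsum_le_tsum_norm (summable_norm_pow_succ_div hk hx)).trans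
    ((summable_norm_pow_succ_div hk hx).tsum_le_tsum (norm_pow_succ_div_le k hx)
      (summable_one_div_nat_add_one_pow hk))

theorem polylog_apply_zero (k : ℕ) : polylog k 0 = 0 := by
  simp [polylog]

theorem ofReal_polylog_one {k : ℕ} (hk : 2 ≤ k) : (polylog k 1 : ℂ) = riemannZeta k := by
  rw [zeta_eq_tsum_one_div_nat_add_one_cpow (by simp; omega), polylog, Complex.ofReal_tsum]
  simp

theorem polylog_one_eq_neg_log {x : ℝ} (hx : |x| < 1) : polylog 1 x = -log (1 - x) := by
  simpa [polylog] using (hasSum_pow_div_log_of_abs_lt_one hx).tsum_eq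

theorem hasDerivAt_polylog_succ (k : ℕ) {x : ℝ} (hx0 : x ≠ 0) (hx : |x| < 1) :
    HasDerivAt (polylog (k + 1)) (polylog k x / x) x := by
  refine (hasDerivAt_tsum_pow_succ_div (e := id)
    (c := fun n : ℕ => ((n : ℝ) + 1) ^ (k + 1)) (fun n => le_self_pow₀ (by simp) (by omega))
    (fun r hr0 hr1 => summable_geometric_of_lt_one hr0 hr1) hx).congr_deriv ?_
  rw [eq_comm, polylog.eq_1, div_eq_iff hx0, ← tsum_mul_right]
  congr 1 with n
  simp only [id]
  field_simp
  ring

theorem hasSum_polylog_div_one_sub {k : ℕ} (hk : 2 ≤ k) {x : ℝ} (hx : |x| < 1) :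
    HasSum (fun p : ℕ × ℕ => x ^ (p.1 + p.2 + 1) / ((p.1 : ℝ) + 1) ^ k)
      (polylog k x / (1 - x)) := by
  have hA := (summable_norm_pow_succ_div hk hx.le).of_norm.hasSum
  have hB := hasSum_geometric_of_abs_lt_one hx
  rw [polylog.eq_1, div_eq_mul_inv]
  exact (hA.mul hB ((summable_norm_pow_succ_div hk hx.le).mul_norm
    hB.summable.norm).of_norm).congr_fun fun p => by ring

theorem hasDerivAt_Li21 {x : ℝ} (hx : |x| < 1) :
    HasDerivAt Li21 (polylog 2 x / (1 - x)) x := by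
  refine (hasDerivAt_tsum_pow_succ_div (e := fun p : ℕ × ℕ => p.1 + p.2 + 1)
    (c := fun p => ((p.1 : ℝ) + 1) ^ 2 * ((p.1 : ℝ) + (p.2 : ℝ) + 2))
    (fun p => by
      push_cast
      nlinarith [mul_nonneg (by positivity : (0 : ℝ) ≤ (p.1 : ℝ) ^ 2 + 2 * p.1)
        (by positivity : (0 : ℝ) ≤ (p.1 : ℝ) + p.2 + 2)])
    (fun r hr0 hr1 => by
      simpa only [pow_succ] using (summable_pow_fst_add_snd hr0 hr1).mul_right r)
    hx).congr_deriv ?_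
  rw [← (hasSum_polylog_div_one_sub le_rfl hx).tsum_eq]
  congr 1 with p
  push_cast
  field_simp
  ring

theorem Li21_zero : Li21 0 = 0 := by
  simp [Li21]

theorem eqOn_of_hasDerivAt_zero_of_tendsto {f : ℝ → ℝ} {a b L : ℝ}
    (hf : ∀ x ∈ Ioo a b, HasDerivAt f 0 x) (hL : Tendsto f (𝓝[<] b) (𝓝 L)) :
    EqOn f (fun _ => L) (Ioo a b) := by
  intro x hx
  obtain ⟨c, hc⟩ := isOpen_Ioo.exists_is_const_of_deriv_eq_zero isPreconnected_Ioo
    (fun y hy => (hf y hy).differentiableAt.differentiableWithinAt) (fun y hy => (hf y hy).deriv)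
  have hab : a < b := hx.1.trans hx.2
  have hfc : Tendsto f (𝓝[<] b) (𝓝 c) := tendsto_const_nhds.congr'
    (eventually_of_mem (Ioo_mem_nhdsLT hab) fun y hy => (hc y hy).symm)
  rw [hc x hx, tendsto_nhds_unique hfc hL]

theorem tendsto_polylog_nhdsLT_one {k : ℕ} (hk : 2 ≤ k) :
    Tendsto (polylog k) (𝓝[<] 1) (𝓝 (polylog k 1)) := by
  rw [← nhdsWithin_Ioo_eq_nhdsLT (by norm_num : (-1 : ℝ) < 1)]
  exact ((continuousOn_polylog hk).continuousWithinAt (by norm_num)).mono Ioo_subset_Icc_self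

theorem continuousAt_polylog_zero {k : ℕ} (hk : 2 ≤ k) : ContinuousAt (polylog k) 0 :=
  (continuousOn_polylog hk).continuousAt (Icc_mem_nhds (by norm_num) (by norm_num))

theorem tendsto_comp_one_sub_nhdsLT_one {f : ℝ → ℝ} (hf : ContinuousAt f 0) :
    Tendsto (fun y => f (1 - y)) (𝓝[<] 1) (𝓝 (f 0)) := by
  refine hf.tendsto.comp (tendsto_nhdsWithin_of_tendsto_nhds ?_)
  have h := (tendsto_const_nhds (x := (1 : ℝ))).sub (tendsto_id (x := 𝓝 (1 : ℝ)))
  rwa [sub_self] at h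

theorem tendsto_log_nhdsLT_one : Tendsto log (𝓝[<] 1) (𝓝 0) := by
  simpa using ((continuousAt_log one_ne_zero).tendsto.mono_left nhdsWithin_le_nhds)

theorem tendsto_log_mul_log_one_sub_nhdsLT_one :
    Tendsto (fun y => log y * log (1 - y)) (𝓝[<] 1) (𝓝 0) := by
  have hmul : Tendsto (fun y => (1 - y) * log (1 - y) / y) (𝓝[<] 1) (𝓝 0) := by
    have h := (tendsto_comp_one_sub_nhdsLT_one continuous_mul_log.continuousAt).div
      (tendsto_nhdsWithin_of_tendsto_nhds tendsto_id) one_ne_zero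
    rwa [zero_mul, zero_div] at h
  refine squeeze_zero_norm' ?_ (by simpa using hmul.norm)
  filter_upwards [Ioo_mem_nhdsLT (zero_lt_one' ℝ)] with y ⟨hy0, hy1⟩
  have hlog : |log y| ≤ (1 - y) / y := by
    have hinv : (1 - y) / y = y⁻¹ - 1 := by field_simp
    rw [abs_of_nonpos (log_nonpos hy0.le hy1.le), hinv]
    linarith [one_sub_inv_le_log_of_pos hy0]
  rw [norm_mul, Real.norm_eq_abs, Real.norm_eq_abs, abs_of_pos hy0, abs_of_pos (sub_pos.2 hy1),
    mul_div_right_comm]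
  exact mul_le_mul_of_nonneg_right hlog (abs_nonneg _)

theorem hasDerivAt_polylog_two {x : ℝ} (hx : x ∈ Ioo (0 : ℝ) 1) :
    HasDerivAt (polylog 2) (-log (1 - x) / x) x := by
  have hx1 : |x| < 1 := abs_lt.2 ⟨by linarith [hx.1], hx.2⟩
  rw [← polylog_one_eq_neg_log hx1]
  exact hasDerivAt_polylog_succ 1 hx.1.ne' hx1

theorem polylog_two_add_polylog_two_one_sub {x : ℝ} (hx : x ∈ Ioo (0 : ℝ) 1) :
    polylog 2 x + polylog 2 (1 - x) + log x * log (1 - x) = polylog 2 1 := by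
  refine eqOn_of_hasDerivAt_zero_of_tendsto
    (f := fun y => polylog 2 y + polylog 2 (1 - y) + log y * log (1 - y)) (fun y hy => ?_) ?_ hx
  · have hy' : 1 - y ∈ Ioo (0 : ℝ) 1 := ⟨by linarith [hy.2], by linarith [hy.1]⟩
    have hsub := (hasDerivAt_id y).const_sub 1
    have h := ((hasDerivAt_polylog_two hy).add ((hasDerivAt_polylog_two hy').comp y hsub)).add
      ((hasDerivAt_log hy.1.ne').mul ((hasDerivAt_log hy'.1.ne').comp y hsub))
    refine h.congr_deriv ?_
    simp only [Function.comp_apply, sub_sub_cancel]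
    field_simp [hy.1.ne', hy'.1.ne']
    ring
  · simpa [polylog_apply_zero] using ((tendsto_polylog_nhdsLT_one le_rfl).add
      (tendsto_comp_one_sub_nhdsLT_one (continuousAt_polylog_zero le_rfl))).add
      tendsto_log_mul_log_one_sub_nhdsLT_one

theorem Li21_one_sub {x : ℝ} (hx : x ∈ Ioo (0 : ℝ) 1) :
    Li21 (1 - x) = 2 * polylog 3 x - 2 * polylog 3 1 - log x * (polylog 2 x + polylog 2 1) := by
  suffices Li21 (1 - x) - 2 * polylog 3 x + log x * (polylog 2 x + polylog 2 1)
      = -2 * polylog 3 1 by linarith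
  refine eqOn_of_hasDerivAt_zero_of_tendsto
    (f := fun y => Li21 (1 - y) - 2 * polylog 3 y + log y * (polylog 2 y + polylog 2 1))
    (fun y hy => ?_) ?_ hx
  · have hy1 : |y| < 1 := abs_lt.2 ⟨by linarith [hy.1], hy.2⟩
    have hy2 : |1 - y| < 1 := abs_lt.2 ⟨by linarith [hy.2], by linarith [hy.1]⟩
    have h := (((hasDerivAt_Li21 hy2).comp y ((hasDerivAt_id y).const_sub 1)).sub
      ((hasDerivAt_polylog_succ 2 hy.1.ne' hy1).const_mul 2)).add
      ((hasDerivAt_log hy.1.ne').mul ((hasDerivAt_polylog_two hy).add_const (polylog 2 1)))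
    refine h.congr_deriv ?_
    rw [sub_sub_cancel, ← polylog_two_add_polylog_two_one_sub hy]
    field_simp
    ring
  · have h := (((tendsto_comp_one_sub_nhdsLT_one (hasDerivAt_Li21 (by simp)).continuousAt).sub
      ((tendsto_polylog_nhdsLT_one (by norm_num : 2 ≤ 3)).const_mul 2)).add
      (tendsto_log_nhdsLT_one.mul ((tendsto_polylog_nhdsLT_one le_rfl).add_const (polylog 2 1))))
    simpa [Li21_zero] using h

theorem mul_exp_half_le_exp_sub_one {t : ℝ} (ht : 0 ≤ t) : t * exp (t / 2) ≤ exp t - 1 := by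
  have hsinh := self_le_sinh_iff.2 (by positivity : 0 ≤ t / 2)
  have hfac : exp t - 1 = 2 * exp (t / 2) * sinh (t / 2) := by
    have h1 : exp (t / 2) * exp (t / 2) = exp t := by rw [← exp_add, add_halves]
    have h2 : exp (t / 2) * exp (-(t / 2)) = 1 := by rw [← exp_add, add_neg_cancel, exp_zero]
    rw [sinh_eq]
    linear_combination -h1 + h2
  rw [hfac]
  nlinarith [exp_pos (t / 2)]

theorem mellinConvergent_div_exp_sub_one {g : ℝ → ℝ} {C : ℝ} (hg : ContinuousOn g (Ioi 0))
    (hgC : ∀ t ∈ Ioi (0 : ℝ), |g t| ≤ C) {s : ℂ} (hs : 1 < s.re) :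
    MellinConvergent (fun t => ((g t / (exp t - 1) : ℝ) : ℂ)) s := by
  have hcont : ContinuousOn (fun t => g t / (exp t - 1)) (Ioi 0) :=
    hg.div (by fun_prop) fun t ht => (sub_pos.2 (one_lt_exp_iff.2 ht)).ne'
  rw [MellinConvergent, mellin_convergent_iff_norm (f := fun t => ((g t / (exp t - 1) : ℝ) : ℂ))
    subset_rfl measurableSet_Ioi
    ((Complex.continuous_ofReal.comp_continuousOn hcont).aestronglyMeasurable measurableSet_Ioi)]
  refine ((integrableOn_rpow_mul_exp_neg_mul_rpow (s := s.re - 2) (by linarith) one_pos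
    (by norm_num : (0 : ℝ) < 1 / 2)).const_mul C).mono' ?_ ?_
  · exact ((continuousOn_id.rpow_const fun t ht => Or.inl (ne_of_gt ht)).mul
      (Complex.continuous_ofReal.comp_continuousOn hcont).norm).aestronglyMeasurable
      measurableSet_Ioi
  · refine (ae_restrict_iff' measurableSet_Ioi).2 (Eventually.of_forall fun t (ht : 0 < t) => ?_)
    have hexp := mul_exp_half_le_exp_sub_one ht.le
    have hden : 0 < exp t - 1 := (mul_pos ht (exp_pos _)).trans_le hexp
    rw [Complex.norm_real, norm_mul, norm_norm, Real.norm_of_nonneg (by positivity), norm_div,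
      Real.norm_eq_abs, Real.norm_of_nonneg hden.le, rpow_one]
    have hC : 0 ≤ C := (abs_nonneg _).trans (hgC t ht)
    calc t ^ (s.re - 1) * (|g t| / (exp t - 1)) ≤ t ^ (s.re - 1) * (C / (t * exp (t / 2))) :=
          mul_le_mul_of_nonneg_left (div_le_div₀ hC (hgC t ht) (by positivity) hexp)
            (by positivity)
      _ = C * (t ^ (s.re - 2) * exp (-(1 / 2) * t)) := by
          rw [show s.re - 1 = s.re - 2 + 1 by ring, rpow_add ht, rpow_one,
            show -(1 / 2) * t = -(t / 2) by ring, exp_neg]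
          field_simp

section HasMellin

variable {E : Type*} [NormedAddCommGroup E] [NormedSpace ℂ E] {f g : ℝ → E} {s : ℂ}
  {m n : E}

theorem HasMellin.cpow_smul {a : ℂ} (hf : HasMellin f (s + a) m) :
    HasMellin (fun t => (t : ℂ) ^ a • f t) s m :=
  ⟨MellinConvergent.cpow_smul.2 hf.1, (mellin_cpow_smul f s a).trans hf.2⟩

theorem HasMellin.congr (hf : HasMellin f s m) (hfg : EqOn f g (Ioi 0)) : HasMellin g s m :=
  ⟨hf.1.congr_fun (fun t ht => by simp only [hfg ht]) measurableSet_Ioi,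
    (setIntegral_congr_fun measurableSet_Ioi fun t ht => by simp only [hfg ht]).symm.trans hf.2⟩

theorem HasMellin.add (hf : HasMellin f s m) (hg : HasMellin g s n) :
    HasMellin (fun t => f t + g t) s (m + n) :=
  hf.2 ▸ hg.2 ▸ hasMellin_add hf.1 hg.1

theorem HasMellin.sub (hf : HasMellin f s m) (hg : HasMellin g s n) :
    HasMellin (fun t => f t - g t) s (m - n) :=
  hf.2 ▸ hg.2 ▸ hasMellin_sub hf.1 hg.1

theorem HasMellin.const_smul (hf : HasMellin f s m) (c : ℂ) :
    HasMellin (fun t => c • f t) s (c • m) :=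
  hf.2 ▸ hasMellin_const_smul hf.1 c

end HasMellin

theorem exp_neg_mul_natCast (t : ℝ) (n : ℕ) : exp (-(n : ℝ) * t) = exp (-t) ^ n := by
  rw [← exp_nat_mul]
  ring_nf

theorem exp_neg_div_one_sub_exp_neg (t : ℝ) : exp (-t) / (1 - exp (-t)) = 1 / (exp t - 1) := by
  rw [exp_neg]
  field_simp [(exp_pos t).ne']

theorem hasSum_exp_neg_mul_nat_add_one {t : ℝ} (ht : 0 < t) :
    HasSum (fun n : ℕ => exp (-((n : ℝ) + 1) * t)) (1 / (exp t - 1)) := by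
  have hx : exp (-t) < 1 := exp_lt_one_iff.2 (neg_neg_of_pos ht)
  rw [← exp_neg_div_one_sub_exp_neg, div_eq_mul_inv]
  refine ((hasSum_geometric_of_lt_one (exp_pos _).le hx).mul_left (exp (-t))).congr_fun
    fun n => ?_
  rw [← Nat.cast_succ, exp_neg_mul_natCast, pow_succ']

theorem hasMellin_one_div_exp_sub_one {s : ℂ} (hs : 1 < s.re) :
    HasMellin (fun t => ((1 / (exp t - 1) : ℝ) : ℂ)) s (Complex.Gamma s * riemannZeta s) := by
  refine ⟨mellinConvergent_div_exp_sub_one (C := 1) continuousOn_const (by simp) hs, ?_⟩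
  have h := hasSum_mellin (a := fun _ : ℕ => (1 : ℂ)) (p := fun n => (n : ℝ) + 1)
    (F := fun t => ((1 / (exp t - 1) : ℝ) : ℂ)) (fun n => Or.inr (by positivity)) (by linarith)
    (fun t ht => by simpa only [one_mul] using
      Complex.hasSum_ofReal.2 (hasSum_exp_neg_mul_nat_add_one ht))
    (by simpa using summable_one_div_nat_add_one_rpow hs)
  rw [← h.tsum_eq, zeta_eq_tsum_one_div_nat_add_one_cpow hs, ← tsum_mul_left]
  congr 1 with n
  push_cast
  ring

theorem hasSum_polylog_exp_neg_div {k : ℕ} (hk : 2 ≤ k) {t : ℝ} (ht : 0 < t) :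
    HasSum (fun p : ℕ × ℕ => 1 / ((p.1 : ℝ) + 1) ^ k * exp (-((p.1 : ℝ) + p.2 + 2) * t))
      (polylog k (exp (-t)) / (exp t - 1)) := by
  have hx : |exp (-t)| < 1 := by
    rw [abs_of_pos (exp_pos _)]
    exact exp_lt_one_iff.2 (neg_neg_of_pos ht)
  have hval : polylog k (exp (-t)) / (exp t - 1)
      = exp (-t) * (polylog k (exp (-t)) / (1 - exp (-t))) := by
    rw [div_eq_mul_one_div, ← exp_neg_div_one_sub_exp_neg]
    ring
  rw [hval]
  refine ((hasSum_polylog_div_one_sub hk hx).mul_left (exp (-t))).congr_fun fun p => ?_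
  have h := exp_neg_mul_natCast t (p.1 + p.2 + 2)
  push_cast at h
  rw [h]
  ring

theorem hasMellin_polylog_exp_neg_div {k : ℕ} (hk : 2 ≤ k) {s : ℂ} (hs : 1 < s.re) :
    HasMellin (fun t => ((polylog k (exp (-t)) / (exp t - 1) : ℝ) : ℂ)) s
      (Complex.Gamma s * doubleZeta k s) := by
  have hx (t : ℝ) (ht : t ∈ Ioi (0 : ℝ)) : |exp (-t)| ≤ 1 := by
    rw [abs_of_pos (exp_pos _)]
    exact exp_le_one_iff.2 (neg_nonpos.2 (le_of_lt ht))
  refine ⟨mellinConvergent_div_exp_sub_one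
    ((continuousOn_polylog hk).comp (by fun_prop) fun t ht => abs_le.1 (hx t ht))
    (fun t ht => abs_polylog_le hk (hx t ht)) hs, ?_⟩
  have h := hasSum_mellin (a := fun p : ℕ × ℕ => ((1 / ((p.1 : ℝ) + 1) ^ k : ℝ) : ℂ))
    (p := fun p => (p.1 : ℝ) + p.2 + 2)
    (F := fun t => ((polylog k (exp (-t)) / (exp t - 1) : ℝ) : ℂ))
    (fun p => Or.inr (by positivity)) (by linarith)
    (fun t ht => by
      simpa only [Complex.ofReal_mul] using
        Complex.hasSum_ofReal.2 (hasSum_polylog_exp_neg_div hk ht))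
    ?_
  · rw [← h.tsum_eq, doubleZeta, ← tsum_mul_left]
    congr 1 with p
    push_cast
    ring
  · refine ((summable_one_div_nat_add_one_pow hk).mul_of_nonneg
      (summable_one_div_nat_add_one_rpow hs) (fun _ => by positivity)
      (fun _ => by positivity)).of_nonneg_of_le (fun _ => by positivity) fun p => ?_
    rw [Complex.norm_real, Real.norm_of_nonneg (by positivity), div_eq_mul_one_div]
    gcongr
    · exact le_add_of_nonneg_left (p.1).cast_nonneg
    · norm_num

theorem Li21_one_sub_exp_neg {t : ℝ} (ht : 0 < t) :
    Li21 (1 - exp (-t)) =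
      2 * polylog 3 (exp (-t)) - 2 * polylog 3 1 + t * (polylog 2 (exp (-t)) + polylog 2 1) := by
  rw [Li21_one_sub ⟨exp_pos _, exp_lt_one_iff.2 (neg_neg_of_pos ht)⟩, log_exp]
  ring

theorem hasMellin_Li21_one_sub_exp_neg_div {s : ℂ} (hs : 1 < s.re) :
    HasMellin (fun t => ((Li21 (1 - exp (-t)) / (exp t - 1) : ℝ) : ℂ)) s
      (2 * (Complex.Gamma s * doubleZeta 3 s) - 2 * polylog 3 1 * (Complex.Gamma s * riemannZeta s)
        + (polylog 2 1 * (Complex.Gamma (s + 1) * riemannZeta (s + 1))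
          + Complex.Gamma (s + 1) * doubleZeta 2 (s + 1))) := by
  have hs1 : 1 < (s + 1).re := by simp; linarith
  have h := (((hasMellin_polylog_exp_neg_div (k := 3) (by norm_num) hs).const_smul 2).sub
    ((hasMellin_one_div_exp_sub_one hs).const_smul (2 * polylog 3 1))).add
    (((hasMellin_one_div_exp_sub_one hs1).const_smul (polylog 2 1)).add
      (hasMellin_polylog_exp_neg_div le_rfl hs1)).cpow_smul
  refine h.congr fun t ht => ?_
  simp only [smul_eq_mul, Complex.cpow_one]
  rw [Li21_one_sub_exp_neg ht]
  push_cast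
  ring

theorem stmt13 (s : ℂ) (hs : 1 < s.re) :
    xi21 s =
      2 * doubleZeta 3 s + s * doubleZeta 2 (s + 1) +
        riemannZeta 2 * s * riemannZeta (s + 1) -
        2 * riemannZeta 3 * riemannZeta s := by
  have hs0 : s ≠ 0 := by
    rintro rfl
    norm_num at hs
  have hΓ : Complex.Gamma s ≠ 0 := Complex.Gamma_ne_zero_of_re_pos (by linarith)
  have hζ2 : (polylog 2 1 : ℂ) = riemannZeta 2 := by exact_mod_cast ofReal_polylog_one le_rfl
  have hζ3 : (polylog 3 1 : ℂ) = riemannZeta 3 := by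
    exact_mod_cast ofReal_polylog_one (by norm_num)
  change 1 / Complex.Gamma s * mellin (fun t => ((Li21 (1 - exp (-t)) / (exp t - 1) : ℝ) : ℂ)) s
    = _
  rw [(hasMellin_Li21_one_sub_exp_neg_div hs).2, Complex.Gamma_add_one s hs0, hζ2, hζ3]
  field_simp
  ring
end
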